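/- arXiv:2510.26169 — 6 statements merged into one kernel-verified Lean document; each statement's English description precedes it below -/
import Mathlib

section
/- Let $k \ge 2$ be an integer. A graph $G$ on exactly $2k+1$ vertices contains no copy of $L_{2k+1}$ as a subgraph if and only if its minimum degree satisfies $\delta(G) \le 2k - 2$. -/
open SimpleGraph Finset

/-- `F` is contained in `G` as a subgraph (an injective adjacency-preserving map). -/
def containsCopy {α β : Type*} (F : SimpleGraph α) (G : SimpleGraph β) : Prop :=
  ∃ f : α ↪ β, ∀ a b, F.Adj a b → G.Adj (f a) (f b)

/-- For even `d` this is the cocktail party graph `CP_d` (complete graph minus the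
perfect matching pairing `2j, 2j+1`); for odd `d` it is the odd cocktail party graph
`L_d = CP_{d-1} ∨ K_1`. -/
def cocktail (d : ℕ) : SimpleGraph (Fin d) :=
  SimpleGraph.fromRel (fun i j => (i : ℕ) / 2 ≠ (j : ℕ) / 2)

/-- `S` is a dissociation set of `G`: every vertex of `S` has at most one neighbor in `S`. -/
def IsDissocSet {V : Type*} (G : SimpleGraph V) (S : Finset V) : Prop :=
  ∀ v ∈ S, ({u | u ∈ S ∧ G.Adj v u}).ncard ≤ 1

/-- The dissociation number of `G`. -/
noncomputable def dissocNum {V : Type*} [Fintype V] (G : SimpleGraph V) : ℕ :=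
  sSup {k | ∃ S : Finset V, IsDissocSet G S ∧ S.card = k}

set_option maxHeartbeats 1000000

lemma exists_embed (k : ℕ) (G : SimpleGraph (Fin (2 * k + 1)))
    (σ : Fin (2 * k + 1) → Fin (2 * k + 1))
    (hσ : ∀ v, σ (σ v) = v)
    (hadj : ∀ u v, u ≠ v → ¬ G.Adj u v → σ u = v) :
    containsCopy (cocktail (2 * k + 1)) G := by
  classical
  have hσinj : Function.Injective σ := fun a b h => by
    have := hσ a; rw [h, hσ b] at this; exact this.symm
  set Heads : Finset (Fin (2 * k + 1)) := univ.filter (fun v => v < σ v) with hHeads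
  set Tails : Finset (Fin (2 * k + 1)) := univ.filter (fun v => σ v < v) with hTails
  set Bs : Finset (Fin (2 * k + 1)) := univ.filter (fun v => σ v = v) with hBs
  set m := Heads.card with hm
  have hcardT : Tails.card = m := by
    rw [hm]
    apply Finset.card_bij (fun v _ => σ v)
    · intro a ha
      simp only [hHeads, hTails, mem_filter, mem_univ, true_and] at ha ⊢
      rw [hσ]; exact ha
    · intro a _ b _ h; exact hσinj h
    · intro t ht
      simp only [hHeads, hTails, mem_filter, mem_univ, true_and] at ht ⊢
      exact ⟨σ t, by rw [hσ]; exact ht, hσ t⟩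
  have hcover : Heads ∪ Tails ∪ Bs = univ := by
    ext v
    simp only [hHeads, hTails, hBs, mem_union, mem_filter, mem_univ, true_and, iff_true]
    rcases lt_trichotomy v (σ v) with h | h | h
    · exact Or.inl (Or.inl h)
    · exact Or.inr h.symm
    · exact Or.inl (Or.inr h)
  have hd1 : Disjoint Heads Tails := by
    rw [Finset.disjoint_left]
    intro a ha hb
    simp only [hHeads, hTails, mem_filter, mem_univ, true_and] at ha hb
    exact absurd hb (not_lt.2 ha.le)
  have hd2 : Disjoint (Heads ∪ Tails) Bs := by
    rw [Finset.disjoint_left]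
    intro a ha hb
    simp only [hHeads, hTails, hBs, mem_union, mem_filter, mem_univ, true_and] at ha hb
    rcases ha with h | h <;> simp [hb] at h
  have hsum : 2 * m + Bs.card = 2 * k + 1 := by
    have := congrArg Finset.card hcover
    rw [Finset.card_union_of_disjoint hd2, Finset.card_union_of_disjoint hd1, hcardT] at this
    simp only [Finset.card_univ, Fintype.card_fin] at this
    omega
  obtain ⟨E1, hE1mem, hE1inj⟩ : ∃ E1 : ℕ → Fin (2 * k + 1),
      (∀ j, j < m → E1 j ∈ Heads) ∧
      (∀ j j', j < m → j' < m → E1 j = E1 j' → j = j') := by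
    refine ⟨fun j => if h : j < m then (Heads.equivFin.symm ⟨j, h⟩ : Fin (2 * k + 1))
        else ⟨0, by omega⟩,
      fun j hj => ?_, fun j j' hj hj' h => ?_⟩
    · simp only [dif_pos hj]; exact (Heads.equivFin.symm ⟨j, hj⟩).2
    · simp only [dif_pos hj, dif_pos hj'] at h
      have := Heads.equivFin.symm.injective (Subtype.coe_injective h)
      exact congrArg Fin.val this
  obtain ⟨E2, hE2mem, hE2inj⟩ : ∃ E2 : ℕ → Fin (2 * k + 1),
      (∀ j, j < Bs.card → E2 j ∈ Bs) ∧
      (∀ j j', j < Bs.card → j' < Bs.card → E2 j = E2 j' → j = j') := by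
    refine ⟨fun j => if h : j < Bs.card then (Bs.equivFin.symm ⟨j, h⟩ : Fin (2 * k + 1))
        else ⟨0, by omega⟩,
      fun j hj => ?_, fun j j' hj hj' h => ?_⟩
    · simp only [dif_pos hj]; exact (Bs.equivFin.symm ⟨j, hj⟩).2
    · simp only [dif_pos hj, dif_pos hj'] at h
      have := Bs.equivFin.symm.injective (Subtype.coe_injective h)
      exact congrArg Fin.val this
  have hHeadlt : ∀ v ∈ Heads, v < σ v := by
    intro v hv; simpa only [hHeads, mem_filter, mem_univ, true_and] using hv
  have hBfix : ∀ v ∈ Bs, σ v = v := by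
    intro v hv; simpa only [hBs, mem_filter, mem_univ, true_and] using hv
  set f : Fin (2 * k + 1) → Fin (2 * k + 1) := fun i =>
    (if ((i : ℕ) < 2 * m) then
      (if (i : ℕ) % 2 = 0 then E1 ((i : ℕ) / 2) else σ (E1 ((i : ℕ) / 2)))
    else E2 ((i : ℕ) - 2 * m)) with hf
  have hfA : ∀ i : Fin (2 * k + 1), (i : ℕ) < 2 * m → σ (f i) ≠ f i := by
    intro i hi
    simp only [hf, if_pos hi]
    have h2 : (i : ℕ) / 2 < m := by omega
    have hlt := hHeadlt _ (hE1mem _ h2)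
    by_cases hp : (i : ℕ) % 2 = 0
    · simp only [if_pos hp]; exact fun h => absurd (h ▸ hlt) (lt_irrefl _)
    · simp only [if_neg hp, hσ]
      intro h; rw [← h] at hlt; exact absurd hlt (lt_irrefl _)
  have hfB : ∀ i : Fin (2 * k + 1), ¬ ((i : ℕ) < 2 * m) → σ (f i) = f i := by
    intro i hi
    simp only [hf, if_neg hi]
    exact hBfix _ (hE2mem _ (by have := i.isLt; omega))
  have hHT : ∀ j j', j < m → j' < m → E1 j ≠ σ (E1 j') := by
    intro j j' hj hj' h
    have h1 := hHeadlt _ (hE1mem _ hj)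
    have h2 := hHeadlt _ (hE1mem _ hj')
    rw [h, hσ] at h1
    exact absurd h1 (not_lt.2 h2.le)
  have hinj : Function.Injective f := by
    intro a b hab
    by_contra hne
    by_cases ha : (a : ℕ) < 2 * m <;> by_cases hb : (b : ℕ) < 2 * m
    · simp only [hf, if_pos ha, if_pos hb] at hab
      have ha2 : (a : ℕ) / 2 < m := by omega
      have hb2 : (b : ℕ) / 2 < m := by omega
      by_cases hpa : (a : ℕ) % 2 = 0 <;> by_cases hpb : (b : ℕ) % 2 = 0
      · simp only [if_pos hpa, if_pos hpb] at hab
        have := hE1inj _ _ ha2 hb2 hab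
        exact hne (Fin.ext (by omega))
      · simp only [if_pos hpa, if_neg hpb] at hab
        exact hHT _ _ ha2 hb2 hab
      · simp only [if_neg hpa, if_pos hpb] at hab
        exact hHT _ _ hb2 ha2 hab.symm
      · simp only [if_neg hpa, if_neg hpb] at hab
        have := hE1inj _ _ ha2 hb2 (hσinj hab)
        exact hne (Fin.ext (by omega))
    · have h1 := hfB b hb; rw [← hab] at h1; exact hfA a ha h1
    · have h1 := hfB a ha; rw [hab] at h1; exact hfA b hb h1
    · simp only [hf, if_neg ha, if_neg hb] at hab
      have := hE2inj _ _ (by have := a.isLt; omega) (by have := b.isLt; omega) hab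
      exact hne (Fin.ext (by omega))
  refine ⟨⟨f, hinj⟩, ?_⟩
  intro a b hab
  rw [cocktail, SimpleGraph.fromRel_adj] at hab
  obtain ⟨hne, hr⟩ := hab
  have hdiv : (a : ℕ) / 2 ≠ (b : ℕ) / 2 := by omega
  simp only [Function.Embedding.coeFn_mk]
  by_contra hnadj
  have hfne : f a ≠ f b := fun h => hne (hinj h)
  have hs : σ (f a) = f b := hadj _ _ hfne hnadj
  have hs' : σ (f b) = f a := by rw [← hs, hσ]
  have ha : (a : ℕ) < 2 * m := by
    by_contra h
    have h1 := hfB a h; rw [hs] at h1; exact hfne h1.symm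
  have hb : (b : ℕ) < 2 * m := by
    by_contra h
    have h1 := hfB b h; rw [hs'] at h1; exact hfne h1
  have ha2 : (a : ℕ) / 2 < m := by omega
  have hb2 : (b : ℕ) / 2 < m := by omega
  simp only [hf, if_pos ha, if_pos hb] at hs
  by_cases hpa : (a : ℕ) % 2 = 0 <;> by_cases hpb : (b : ℕ) % 2 = 0
  · simp only [if_pos hpa, if_pos hpb] at hs
    exact hHT _ _ hb2 ha2 hs.symm
  · simp only [if_pos hpa, if_neg hpb] at hs
    exact hdiv (hE1inj _ _ ha2 hb2 (hσinj hs))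
  · simp only [if_neg hpa, if_pos hpb, hσ] at hs
    exact hdiv (hE1inj _ _ ha2 hb2 hs)
  · simp only [if_neg hpa, if_neg hpb, hσ] at hs
    exact hHT _ _ ha2 hb2 hs

theorem stmt3 (k : ℕ) (hk : 2 ≤ k) (G : SimpleGraph (Fin (2 * k + 1)))
    [DecidableRel G.Adj] :
    ¬ containsCopy (cocktail (2 * k + 1)) G ↔ G.minDegree ≤ 2 * k - 2 := by
  classical
  constructor
  · intro hnc
    by_contra hmin
    push_neg at hmin
    apply hnc
    have hdeg : ∀ v, 2 * k - 1 ≤ G.degree v := fun v =>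
      le_trans (by omega) (G.minDegree_le_degree v)
    have hcdeg : ∀ v, (Gᶜ.neighborFinset v).card ≤ 1 := by
      intro v
      have h1 : Gᶜ.degree v = Fintype.card (Fin (2 * k + 1)) - 1 - G.degree v :=
        SimpleGraph.degree_compl G v
      have h2 := hdeg v
      have h3 : G.degree v ≤ 2 * k := by
        have := G.degree_le_maxDegree v
        have := G.maxDegree_le_of_forall_degree_le (2 * k) (fun w => by
          have := (G.degree_lt_card_verts w); simp only [Fintype.card_fin] at this; omega)
        omega
      have : Gᶜ.degree v ≤ 1 := by
        rw [h1]; simp only [Fintype.card_fin]; omega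
      exact this
    have huniq : ∀ v u w : Fin (2 * k + 1), Gᶜ.Adj v u → Gᶜ.Adj v w → u = w := by
      intro v u w h1 h2
      exact Finset.card_le_one.mp (hcdeg v) u (by rwa [SimpleGraph.mem_neighborFinset])
        w (by rwa [SimpleGraph.mem_neighborFinset])
    set σ : Fin (2 * k + 1) → Fin (2 * k + 1) := fun v =>
      if h : ∃ u, Gᶜ.Adj v u then h.choose else v with hσdef
    have hσspec : ∀ v u, Gᶜ.Adj v u → σ v = u := by
      intro v u h
      have hex : ∃ u, Gᶜ.Adj v u := ⟨u, h⟩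
      simp only [hσdef, dif_pos hex]
      exact huniq v _ u hex.choose_spec h
    have hσ : ∀ v, σ (σ v) = v := by
      intro v
      by_cases h : ∃ u, Gᶜ.Adj v u
      · obtain ⟨u, hu⟩ := h
        rw [hσspec v u hu]
        exact hσspec u v hu.symm
      · have : σ v = v := by simp only [hσdef, dif_neg h]
        rw [this, this]
    refine exists_embed k G σ hσ ?_
    intro u v hne hnadj
    exact hσspec u v ((SimpleGraph.compl_adj G u v).mpr ⟨hne, hnadj⟩)
  · rintro hmin ⟨f, hmap⟩
    have hsurj : Function.Surjective f :=
      (Finite.injective_iff_bijective.mp f.injective).2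
    obtain ⟨v, hv⟩ := G.exists_minimal_degree_vertex
    obtain ⟨i, rfl⟩ := hsurj v
    have hsub : ((cocktail (2 * k + 1)).neighborFinset i).card ≤ G.degree (f i) := by
      apply Finset.card_le_card_of_injOn f
      · intro j hj
        rw [Finset.mem_coe, SimpleGraph.mem_neighborFinset] at hj ⊢
        exact hmap _ _ hj
      · exact f.injective.injOn
    have hsplit := Finset.card_filter_add_card_filter_not
      (s := (univ : Finset (Fin (2 * k + 1)))) (p := fun j => (cocktail (2 * k + 1)).Adj i j)
    have hNF : (cocktail (2 * k + 1)).neighborFinset i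
        = univ.filter (fun j => (cocktail (2 * k + 1)).Adj i j) := by
      ext j; simp [SimpleGraph.mem_neighborFinset]
    have hnn : (univ.filter (fun j => ¬ (cocktail (2 * k + 1)).Adj i j)).card ≤ 2 := by
      refine le_trans (Finset.card_le_card_of_injOn (t := Finset.range 2)
        (fun j => (j : ℕ) % 2) ?_ ?_) (le_of_eq (Finset.card_range 2))
      · intro j _; simp only [Finset.mem_coe, Finset.mem_range]; omega
      · intro j hj j' hj' h
        simp only [Finset.mem_coe, mem_filter, mem_univ, true_and, cocktail,
          SimpleGraph.fromRel_adj, not_and, not_or, ne_eq, not_not] at hj hj'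
        have h' : (j : ℕ) % 2 = (j' : ℕ) % 2 := h
        have h1 : (i : ℕ) / 2 = (j : ℕ) / 2 := by
          by_cases he : i = j
          · rw [he]
          · exact (hj he).1
        have h2 : (i : ℕ) / 2 = (j' : ℕ) / 2 := by
          by_cases he : i = j'
          · rw [he]
          · exact (hj' he).1
        have : (j : ℕ) = (j' : ℕ) := by omega
        exact Fin.ext this
    have hcard : 2 * k - 1 ≤ ((cocktail (2 * k + 1)).neighborFinset i).card := by
      rw [hNF]
      simp only [Finset.card_univ, Fintype.card_fin] at hsplit
      omega
    rw [hv] at hmin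
    omega
end

section
/- If $n$ is even, the cocktail party graph $CP_n$ is the unique graph with the minimum number of edges among all $n$-vertex graphs with dissociation number equal to 2; if $n$ is odd, the odd cocktail party graph $L_n$ is the unique such edge minimizer. -/
open SimpleGraph Finset

section MatchingIso

variable {V : Type*} [Fintype V] [DecidableEq V]

lemma nbr_eq_singleton {M : SimpleGraph V} [DecidableRel M.Adj]
    (hM : ∀ v, M.degree v ≤ 1) {v u : V} (h : M.Adj v u) :
    M.neighborFinset v = {u} := by
  apply Finset.eq_singleton_iff_unique_mem.mpr
  refine ⟨(M.mem_neighborFinset v u).mpr h, fun w hw => ?_⟩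
  exact Finset.card_le_one.mp (hM v) w hw u ((M.mem_neighborFinset v u).mpr h)

lemma exists_matchPerm (M : SimpleGraph V) [DecidableRel M.Adj]
    (hM : ∀ v, M.degree v ≤ 1) :
    ∃ σ : Equiv.Perm V, (∀ u v, M.Adj u v ↔ σ u = v ∧ u ≠ v) ∧ σ * σ = 1 := by
  classical
  set p : V → V := fun v => if h : (M.neighborFinset v).Nonempty then h.choose else v with hpdef
  have hp : ∀ v u, M.Adj v u → p v = u := by
    intro v u h
    have hne : (M.neighborFinset v).Nonempty := ⟨u, (M.mem_neighborFinset v u).mpr h⟩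
    have : p v = hne.choose := by rw [hpdef]; exact dif_pos hne
    have hmem : hne.choose = u := Finset.mem_singleton.mp
      (by rw [← nbr_eq_singleton hM h]; exact hne.choose_spec)
    rw [this, hmem]
  have hadj : ∀ v, (M.neighborFinset v).Nonempty → M.Adj v (p v) := by
    intro v h
    have : p v = h.choose := by rw [hpdef]; exact dif_pos h
    rw [this]
    exact (M.mem_neighborFinset v _).mp h.choose_spec
  have hinv : Function.Involutive p := by
    intro v
    by_cases h : (M.neighborFinset v).Nonempty
    · exact hp _ _ (hadj v h).symm
    · have hv : p v = v := by rw [hpdef]; exact dif_neg h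
      rw [hv, hv]
  refine ⟨hinv.toPerm, fun u v => ?_, ?_⟩
  · constructor
    · intro h
      exact ⟨hp u v h, h.ne⟩
    · rintro ⟨he, hne⟩
      have hnonempty : (M.neighborFinset u).Nonempty := by
        by_contra hc
        have : p u = u := by rw [hpdef]; exact dif_neg hc
        rw [Function.Involutive.coe_toPerm] at he
        exact hne (by rw [this] at he; exact he)
      have := hadj u hnonempty
      rw [Function.Involutive.coe_toPerm] at he
      rwa [he] at this
  · ext v
    simp [Equiv.Perm.mul_apply, hinv v]

lemma matchPerm_support_card {M : SimpleGraph V} [DecidableRel M.Adj]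
    (hM : ∀ v, M.degree v ≤ 1) {σ : Equiv.Perm V}
    (hσ : ∀ u v, M.Adj u v ↔ σ u = v ∧ u ≠ v) :
    σ.support.card = 2 * M.edgeFinset.card := by
  rw [← M.sum_degrees_eq_twice_card_edges]
  have hdeg : ∀ v, M.degree v = if σ v ≠ v then 1 else 0 := by
    intro v
    by_cases h : σ v ≠ v
    · have hadj : M.Adj v (σ v) := (hσ v (σ v)).mpr ⟨rfl, fun hc => h hc.symm⟩
      rw [if_pos h, ← card_neighborFinset_eq_degree, nbr_eq_singleton hM hadj,
        Finset.card_singleton]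
    · rw [if_neg h, ← card_neighborFinset_eq_degree, Finset.card_eq_zero]
      push_neg at h
      ext u
      simp only [mem_neighborFinset, Finset.notMem_empty, iff_false]
      intro hadj
      obtain ⟨h1, h2⟩ := (hσ v u).mp hadj
      exact h2 (by rw [← h1, h])
  rw [Finset.sum_congr rfl fun v _ => hdeg v, ← Finset.card_filter]
  congr 1

lemma matching_iso (M N : SimpleGraph V) [DecidableRel M.Adj] [DecidableRel N.Adj]
    (hM : ∀ v, M.degree v ≤ 1) (hN : ∀ v, N.degree v ≤ 1)
    (he : M.edgeFinset.card = N.edgeFinset.card) : Nonempty (M ≃g N) := by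
  classical
  obtain ⟨σ, hσ, hσ2⟩ := exists_matchPerm M hM
  obtain ⟨τ, hτ, hτ2⟩ := exists_matchPerm N hN
  by_cases h0 : M.edgeFinset.card = 0
  · -- both graphs have no edges
    have hM0 : ∀ u v, ¬ M.Adj u v := by
      intro u v hadj
      have : M.edgeFinset.Nonempty := ⟨s(u, v), by simp [SimpleGraph.mem_edgeFinset, hadj]⟩
      simp [Finset.card_eq_zero.mp h0] at this
    have hN0 : ∀ u v, ¬ N.Adj u v := by
      intro u v hadj
      have : N.edgeFinset.Nonempty := ⟨s(u, v), by simp [SimpleGraph.mem_edgeFinset, hadj]⟩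
      simp [Finset.card_eq_zero.mp (he ▸ h0)] at this
    exact ⟨⟨Equiv.refl V, by simp [hM0, hN0]⟩⟩
  · have key : ∀ (G : SimpleGraph V) (inst : DecidableRel G.Adj) (π : Equiv.Perm V),
        (∀ v, G.degree v ≤ 1) → (∀ u v, G.Adj u v ↔ π u = v ∧ u ≠ v) → π * π = 1 →
        G.edgeFinset.card ≠ 0 →
        π.cycleType = Multiset.replicate G.edgeFinset.card 2 := by
      intro G inst π hG hπ hπ2 hG0
      have hsupp : π.support.card = 2 * G.edgeFinset.card := matchPerm_support_card hG hπ
      have hπne : π ≠ 1 := by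
        intro h
        rw [h] at hsupp
        simp only [Equiv.Perm.support_one, Finset.card_empty] at hsupp
        omega
      have hord : orderOf π = 2 := by
        have hdvd : orderOf π ∣ 2 := orderOf_dvd_of_pow_eq_one (by rw [pow_two]; exact hπ2)
        rcases (Nat.prime_two.eq_one_or_self_of_dvd _ hdvd) with h | h
        · exact absurd h (by simpa [orderOf_eq_one_iff] using hπne)
        · exact h
      have hall : ∀ x ∈ π.cycleType, x = 2 := by
        intro x hx
        have h2le := Equiv.Perm.two_le_of_mem_cycleType hx
        have hdvd : x ∣ 2 := hord ▸ Equiv.Perm.dvd_of_mem_cycleType hx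
        exact le_antisymm (Nat.le_of_dvd two_pos hdvd) h2le
      have hrep := Multiset.eq_replicate_card.mpr hall
      have hsum := π.sum_cycleType
      rw [hrep] at hsum ⊢
      rw [Multiset.sum_replicate, smul_eq_mul] at hsum
      congr 1
      omega
    have hMc := key M _ σ hM hσ hσ2 h0
    have hNc := key N _ τ hN hτ hτ2 (by rw [← he]; exact h0)
    have hconj : IsConj σ τ := Equiv.Perm.isConj_iff_cycleType_eq.mpr (by rw [hMc, hNc, he])
    obtain ⟨π, hπ⟩ := isConj_iff.mp hconj
    have hkey : ∀ a, τ (π a) = π (σ a) := by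
      intro a
      rw [← hπ]
      simp [Equiv.Perm.mul_apply]
    refine ⟨⟨π, ?_⟩⟩
    intro a b
    rw [hτ, hσ, hkey, Equiv.apply_eq_iff_eq]
    simp

end MatchingIso

lemma cocktail_adj {n : ℕ} (i j : Fin n) :
    (cocktail n).Adj i j ↔ (i : ℕ) / 2 ≠ (j : ℕ) / 2 := by
  rw [cocktail, fromRel_adj]
  constructor
  · rintro ⟨-, h | h⟩ <;> omega
  · intro h
    exact ⟨fun hij => h (by rw [hij]), Or.inl h⟩

lemma cocktail_compl_adj {n : ℕ} (i j : Fin n) :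
    (cocktail n)ᶜ.Adj i j ↔ i ≠ j ∧ (i : ℕ) / 2 = (j : ℕ) / 2 := by
  rw [compl_adj, cocktail_adj, not_not]

lemma cocktail_compl_deg {n : ℕ} [DecidableRel (cocktail n)ᶜ.Adj] (v : Fin n) :
    (cocktail n)ᶜ.degree v ≤ 1 := by
  rw [← card_neighborFinset_eq_degree]
  rw [Finset.card_le_one]
  intro a ha b hb
  rw [mem_neighborFinset, cocktail_compl_adj] at ha hb
  have h1 : (v : ℕ) ≠ (a : ℕ) := fun hc => ha.1 (Fin.ext hc)
  have h2 : (v : ℕ) ≠ (b : ℕ) := fun hc => hb.1 (Fin.ext hc)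
  exact Fin.ext (by omega)

lemma cocktail_compl_deg_eq {n : ℕ} [DecidableRel (cocktail n)ᶜ.Adj] (v : Fin n) :
    (cocktail n)ᶜ.degree v = if 2 * ((v : ℕ) / 2) + 1 < n then 1 else 0 := by
  rw [← card_neighborFinset_eq_degree]
  by_cases h : 2 * ((v : ℕ) / 2) + 1 < n
  · rw [if_pos h]
    have hlt : 2 * ((v : ℕ) / 2) + 1 - (v : ℕ) % 2 < n := by omega
    have : (cocktail n)ᶜ.neighborFinset v = {⟨2 * ((v : ℕ) / 2) + 1 - (v : ℕ) % 2, hlt⟩} := by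
      ext w
      rw [mem_neighborFinset, cocktail_compl_adj, Finset.mem_singleton]
      constructor
      · rintro ⟨hne, hdiv⟩
        have hvw : (v : ℕ) ≠ (w : ℕ) := fun hc => hne (Fin.ext hc)
        have := w.isLt
        exact Fin.ext (by simp only []; omega)
      · intro hw
        subst hw
        have hv2 := Nat.mod_two_eq_zero_or_one (v : ℕ)
        constructor
        · intro hc
          have := congrArg Fin.val hc
          simp only [] at this
          omega
        · simp only []
          omega
    rw [this, Finset.card_singleton]
  · rw [if_neg h, Finset.card_eq_zero, Finset.eq_empty_iff_forall_notMem]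
    intro w hw
    rw [mem_neighborFinset, cocktail_compl_adj] at hw
    have hvw : (v : ℕ) ≠ (w : ℕ) := fun hc => hw.1 (Fin.ext hc)
    have h1 := w.isLt
    have h2 := v.isLt
    have := hw.2
    omega

lemma cocktail_compl_card_edges {n : ℕ} [DecidableRel (cocktail n)ᶜ.Adj] :
    (cocktail n)ᶜ.edgeFinset.card = n / 2 := by
  have h := (cocktail n)ᶜ.sum_degrees_eq_twice_card_edges
  rw [Finset.sum_congr rfl fun v _ => cocktail_compl_deg_eq v] at h
  have h2 : ∑ v : Fin n, (if 2 * ((v : ℕ) / 2) + 1 < n then 1 else 0)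
      = ∑ i ∈ Finset.range n, (if 2 * (i / 2) + 1 < n then 1 else 0) :=
    Fin.sum_univ_eq_sum_range (fun i => if 2 * (i / 2) + 1 < n then 1 else 0) n
  rw [h2, ← Finset.card_filter] at h
  have h3 : (Finset.range n).filter (fun i => 2 * (i / 2) + 1 < n)
      = Finset.range (2 * (n / 2)) := by
    ext i
    simp only [Finset.mem_filter, Finset.mem_range]
    omega
  rw [h3, Finset.card_range] at h
  omega

lemma ecard_eq {V : Type*} (G : SimpleGraph V) [Fintype G.edgeSet] :
    Nat.card G.edgeSet = G.edgeFinset.card := by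
  rw [Nat.card_coe_set_eq, Set.ncard_eq_toFinset_card']; rfl

lemma edge_add_compl {n : ℕ} (G : SimpleGraph (Fin n)) [DecidableRel G.Adj]
    [DecidableRel Gᶜ.Adj] :
    G.edgeFinset.card + Gᶜ.edgeFinset.card = n.choose 2 := by
  classical
  have hd : Disjoint G.edgeFinset Gᶜ.edgeFinset := disjoint_edgeFinset.mpr disjoint_compl_right
  rw [← Finset.card_union_of_disjoint hd, ← edgeFinset_sup]
  have h1 : Nat.card (G ⊔ Gᶜ).edgeSet = Nat.card (⊤ : SimpleGraph (Fin n)).edgeSet := by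
    rw [sup_compl_eq_top]
  rw [← ecard_eq, h1, ecard_eq, card_edgeFinset_top_eq_card_choose_two, Fintype.card_fin]

lemma dissoc_no_two_adj {V : Type*} {G : SimpleGraph V} {S : Finset V} (hS : IsDissocSet G S)
    {x y z : V} (hx : x ∈ S) (hy : y ∈ S) (hz : z ∈ S) (hyz : y ≠ z)
    (h1 : G.Adj x y) (h2 : G.Adj x z) : False := by
  have hsub : ({y, z} : Set V) ⊆ {u | u ∈ S ∧ G.Adj x u} := by
    rintro u (hu | hu)
    · exact hu ▸ ⟨hy, h1⟩
    · exact hu ▸ ⟨hz, h2⟩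
  have hfin : ({u | u ∈ S ∧ G.Adj x u} : Set V).Finite :=
    S.finite_toSet.subset (fun u hu => hu.1)
  have h3 := Set.ncard_le_ncard hsub hfin
  rw [Set.ncard_pair hyz] at h3
  have := hS x hx
  omega

lemma bddAbove_dissoc {V : Type*} [Fintype V] (G : SimpleGraph V) :
    BddAbove {k | ∃ S : Finset V, IsDissocSet G S ∧ S.card = k} := by
  refine ⟨Fintype.card V, fun k hk => ?_⟩
  obtain ⟨S, -, hcard⟩ := hk
  rw [← hcard]
  exact S.card_le_univ.trans_eq (Finset.card_univ)

lemma dissocNum_cocktail {n : ℕ} (hn : 2 ≤ n) : dissocNum (cocktail n) = 2 := by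
  have vne : ∀ {x y : Fin n}, x ≠ y → (x : ℕ) ≠ (y : ℕ) := fun h hc => h (Fin.ext hc)
  apply le_antisymm
  · apply csSup_le
    · exact ⟨0, ∅, fun v hv => absurd hv (by simp), rfl⟩
    · rintro k ⟨S, hS, rfl⟩
      by_contra hk
      push_neg at hk
      obtain ⟨a, ha⟩ : S.Nonempty := by rw [← Finset.card_pos]; omega
      have h2 : 1 < (S.erase a).card := by
        rw [Finset.card_erase_of_mem ha]; omega
      obtain ⟨b, hb, c, hc, hbc⟩ := Finset.one_lt_card.mp h2
      have hab : b ≠ a := Finset.ne_of_mem_erase hb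
      have hac : c ≠ a := Finset.ne_of_mem_erase hc
      have hb' := Finset.mem_of_mem_erase hb
      have hc' := Finset.mem_of_mem_erase hc
      by_cases hab2 : (a : ℕ) / 2 = (b : ℕ) / 2
      · by_cases hac2 : (a : ℕ) / 2 = (c : ℕ) / 2
        · have h1 := vne hab
          have h2 := vne hac
          have h3 := vne hbc
          omega
        · exact dissoc_no_two_adj hS hc' ha hb' hab.symm
            ((cocktail_adj _ _).mpr (by omega)) ((cocktail_adj _ _).mpr (by omega))
      · by_cases hbc2 : (b : ℕ) / 2 = (c : ℕ) / 2
        · exact dissoc_no_two_adj hS ha hb' hc' hbc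
            ((cocktail_adj _ _).mpr (by omega)) ((cocktail_adj _ _).mpr (by omega))
        · by_cases hac2 : (a : ℕ) / 2 = (c : ℕ) / 2
          · exact dissoc_no_two_adj hS hb' ha hc' hac.symm
              ((cocktail_adj _ _).mpr (by omega)) ((cocktail_adj _ _).mpr (by omega))
          · exact dissoc_no_two_adj hS ha hb' hc' hbc
              ((cocktail_adj _ _).mpr (by omega)) ((cocktail_adj _ _).mpr (by omega))
  · apply le_csSup (bddAbove_dissoc _)
    refine ⟨{⟨0, by omega⟩, ⟨1, by omega⟩}, ?_, ?_⟩
    · intro v hv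
      have : {u | u ∈ ({⟨0, by omega⟩, ⟨1, by omega⟩} : Finset (Fin n)) ∧ (cocktail n).Adj v u}
          = ∅ := by
        rw [Set.eq_empty_iff_forall_notMem]
        rintro u ⟨huS, hadj⟩
        rw [cocktail_adj] at hadj
        rw [Finset.mem_insert, Finset.mem_singleton] at huS hv
        rcases hv with hv | hv <;> rcases huS with hu | hu <;>
          (subst hv; subst hu; simp only [Fin.val_mk] at hadj; omega)
      rw [this]
      simp
    · rw [Finset.card_insert_of_notMem (by
        rw [Finset.mem_singleton]
        intro h
        have := congrArg Fin.val h
        simp at this), Finset.card_singleton]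

lemma compl_deg_le_one {n : ℕ} (G : SimpleGraph (Fin n)) [DecidableRel G.Adj]
    [DecidableRel Gᶜ.Adj] (hG : dissocNum G = 2) (v : Fin n) : Gᶜ.degree v ≤ 1 := by
  by_contra hdeg
  push_neg at hdeg
  rw [← card_neighborFinset_eq_degree] at hdeg
  obtain ⟨a, ha, b, hb, hab⟩ := Finset.one_lt_card.mp hdeg
  rw [mem_neighborFinset, compl_adj] at ha hb
  have hS : IsDissocSet G {v, a, b} := by
    intro w hw
    rw [Finset.mem_insert, Finset.mem_insert, Finset.mem_singleton] at hw
    have hmem : ∀ u : Fin n, u ∈ ({v, a, b} : Finset (Fin n)) ↔ u = v ∨ u = a ∨ u = b := by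
      intro u
      rw [Finset.mem_insert, Finset.mem_insert, Finset.mem_singleton]
    rcases hw with rfl | rfl | rfl
    · have : {u | u ∈ ({w, a, b} : Finset (Fin n)) ∧ G.Adj w u} = ∅ := by
        rw [Set.eq_empty_iff_forall_notMem]
        rintro u ⟨huS, hadj⟩
        rw [hmem] at huS
        rcases huS with rfl | rfl | rfl
        · exact G.irrefl hadj
        · exact ha.2 hadj
        · exact hb.2 hadj
      rw [this]; simp
    · have hsub : {u | u ∈ ({v, w, b} : Finset (Fin n)) ∧ G.Adj w u} ⊆ {b} := by
        rintro u ⟨huS, hadj⟩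
        rw [hmem] at huS
        rcases huS with rfl | rfl | rfl
        · exact absurd hadj.symm ha.2
        · exact absurd hadj (G.irrefl)
        · rfl
      calc _ ≤ ({b} : Set (Fin n)).ncard := Set.ncard_le_ncard hsub (Set.finite_singleton b)
        _ = 1 := Set.ncard_singleton b
    · have hsub : {u | u ∈ ({v, a, w} : Finset (Fin n)) ∧ G.Adj w u} ⊆ {a} := by
        rintro u ⟨huS, hadj⟩
        rw [hmem] at huS
        rcases huS with rfl | rfl | rfl
        · exact absurd hadj.symm hb.2
        · rfl
        · exact absurd hadj (G.irrefl)
      calc _ ≤ ({a} : Set (Fin n)).ncard := Set.ncard_le_ncard hsub (Set.finite_singleton a)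
        _ = 1 := Set.ncard_singleton a
  have hcard : ({v, a, b} : Finset (Fin n)).card = 3 := by
    rw [Finset.card_insert_of_notMem (by simp [ha.1, hb.1]),
      Finset.card_insert_of_notMem (by simp [hab]), Finset.card_singleton]
  have h3 : 3 ≤ dissocNum G := le_csSup (bddAbove_dissoc _) ⟨_, hS, hcard⟩
  omega

lemma compl_iso_lift {V W : Type*} {G : SimpleGraph V} {H : SimpleGraph W}
    (e : Gᶜ ≃g Hᶜ) : Nonempty (G ≃g H) := by
  refine ⟨⟨e.toEquiv, ?_⟩⟩
  intro a b
  by_cases hab : a = b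
  · subst hab
    simp
  · have h2 : Hᶜ.Adj (e.toEquiv a) (e.toEquiv b) ↔ Gᶜ.Adj a b := e.map_rel_iff
    rw [compl_adj, compl_adj] at h2
    have hne : e.toEquiv a ≠ e.toEquiv b := fun h => hab (e.toEquiv.injective h)
    tauto

theorem stmt5 (n : ℕ) (hn : 2 ≤ n) :
    dissocNum (cocktail n) = 2 ∧
    ∀ G : SimpleGraph (Fin n), dissocNum G = 2 →
      Nat.card (cocktail n).edgeSet ≤ Nat.card G.edgeSet ∧
      (Nat.card G.edgeSet = Nat.card (cocktail n).edgeSet →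
        Nonempty (G ≃g cocktail n)) := by
  classical
  refine ⟨dissocNum_cocktail hn, fun G hG => ?_⟩
  have hdegc : ∀ v, Gᶜ.degree v ≤ 1 := compl_deg_le_one G hG
  have hGsum := edge_add_compl G
  have hCsum := edge_add_compl (cocktail n)
  have hCc : (cocktail n)ᶜ.edgeFinset.card = n / 2 := cocktail_compl_card_edges
  have hGc : Gᶜ.edgeFinset.card ≤ n / 2 := by
    have h := Gᶜ.sum_degrees_eq_twice_card_edges
    have h2 : ∑ v : Fin n, Gᶜ.degree v ≤ ∑ _v : Fin n, 1 :=
      Finset.sum_le_sum fun v _ => hdegc v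
    rw [Finset.sum_const, smul_eq_mul, mul_one, Finset.card_univ, Fintype.card_fin] at h2
    omega
  have e1 : Nat.card G.edgeSet = G.edgeFinset.card := ecard_eq G
  have e2 : Nat.card (cocktail n).edgeSet = (cocktail n).edgeFinset.card := ecard_eq _
  constructor
  · rw [e1, e2]
    omega
  · intro heq
    rw [e1, e2] at heq
    have heqf : Gᶜ.edgeFinset.card = (cocktail n)ᶜ.edgeFinset.card := by omega
    have hcd : ∀ v, (cocktail n)ᶜ.degree v ≤ 1 := fun v => cocktail_compl_deg v
    obtain ⟨e⟩ := matching_iso Gᶜ (cocktail n)ᶜ hdegc hcd heqf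
    exact compl_iso_lift e
end

section
/- Let $G_1$ be a connected graph on $n$ vertices with dissociation number $k$, and let $e_{min}(n, k+1)$ denote the minimum number of edges among all connected $n$-vertex graphs with dissociation number $k+1$. Then $e(G_1) \ge e_{min}(n, k+1)$. -/
open SimpleGraph Finset

variable {V : Type*}





lemma isDissocSet_mono {G G' : SimpleGraph V} (h : G' ≤ G) {S : Finset V}
    (hS : IsDissocSet G S) : IsDissocSet G' S := by
  intro v hv
  refine le_trans (Set.ncard_le_ncard ?_ (S.finite_toSet.subset fun u hu => hu.1)) (hS v hv)
  rintro u ⟨hu, ha⟩; exact ⟨hu, h ha⟩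

lemma isDissocSet_empty (G : SimpleGraph V) : IsDissocSet G ∅ := by
  intro v hv; simp at hv

section fin
variable [Fintype V] {G G' : SimpleGraph V}

lemma dissoc_bddAbove (G : SimpleGraph V) :
    BddAbove {k | ∃ S : Finset V, IsDissocSet G S ∧ S.card = k} := by
  refine ⟨Fintype.card V, ?_⟩
  rintro m ⟨S, _, rfl⟩
  exact S.card_le_univ.trans_eq (by simp)

lemma card_le_dissocNum {S : Finset V} (hS : IsDissocSet G S) : S.card ≤ dissocNum G :=
  le_csSup (dissoc_bddAbove G) ⟨S, hS, rfl⟩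

lemma exists_dissoc_card_eq (G : SimpleGraph V) :
    ∃ S : Finset V, IsDissocSet G S ∧ S.card = dissocNum G := by
  have h0 : (0:ℕ) ∈ {k | ∃ S : Finset V, IsDissocSet G S ∧ S.card = k} :=
    ⟨∅, isDissocSet_empty G, rfl⟩
  exact Nat.sSup_mem ⟨0, h0⟩ (dissoc_bddAbove G)

lemma dissocNum_le_card (G : SimpleGraph V) : dissocNum G ≤ Fintype.card V := by
  obtain ⟨S, _, hcard⟩ := exists_dissoc_card_eq G
  rw [← hcard]; exact S.card_le_univ.trans_eq (by simp)

lemma dissocNum_mono (h : G' ≤ G) : dissocNum G ≤ dissocNum G' := by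
  obtain ⟨S, hS, hcard⟩ := exists_dissoc_card_eq G
  rw [← hcard]
  exact card_le_dissocNum (isDissocSet_mono h hS)

lemma dissocNum_deleteEdges_le (G : SimpleGraph V) (u v : V) :
    dissocNum (G.deleteEdges {s(u,v)}) ≤ dissocNum G + 1 := by
  classical
  obtain ⟨S, hS, hcard⟩ := exists_dissoc_card_eq (G.deleteEdges {s(u,v)})
  have hdis : IsDissocSet G (S.erase u) := by
    intro w hw
    have hwS : w ∈ S := Finset.mem_of_mem_erase hw
    have hwu : w ≠ u := Finset.ne_of_mem_erase hw
    refine le_trans (Set.ncard_le_ncard ?_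
      (S.finite_toSet.subset fun x hx => hx.1)) (hS w hwS)
    rintro x ⟨hx, ha⟩
    have hxS : x ∈ S := Finset.mem_of_mem_erase hx
    have hxu : x ≠ u := Finset.ne_of_mem_erase hx
    refine ⟨hxS, deleteEdges_adj.2 ⟨ha, ?_⟩⟩
    simp only [Set.mem_singleton_iff, Sym2.eq_iff]
    rintro (⟨rfl, rfl⟩ | ⟨rfl, rfl⟩)
    · exact hwu rfl
    · exact hxu rfl
  have h1 : S.card ≤ (S.erase u).card + 1 := by
    by_cases hu : u ∈ S
    · rw [Finset.card_erase_of_mem hu]; omega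
    · rw [Finset.erase_eq_of_notMem hu]; omega
  calc dissocNum (G.deleteEdges {s(u,v)}) = S.card := hcard.symm
    _ ≤ (S.erase u).card + 1 := h1
    _ ≤ dissocNum G + 1 := by gcongr; exact card_le_dissocNum hdis

end fin



lemma reachable_transfer {G : SimpleGraph V} {u v : V}
    (h : (G.deleteEdges {s(u,v)}).Reachable u v) :
    ∀ {a b : V}, G.Reachable a b → (G.deleteEdges {s(u,v)}).Reachable a b := by
  intro a b hab
  obtain ⟨w⟩ := hab
  induction w with
  | nil => rfl
  | @cons a x b hadj p ih =>
    by_cases he : s(a, x) = s(u, v)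
    · rw [Sym2.eq_iff] at he
      rcases he with ⟨rfl, rfl⟩ | ⟨rfl, rfl⟩
      · exact h.trans ih
      · exact h.symm.trans ih
    · exact (Reachable.trans ⟨Walk.cons (deleteEdges_adj.2 ⟨hadj, he⟩) Walk.nil⟩ ih)

lemma connected_deleteEdges_of_not_isBridge {G : SimpleGraph V} {u v : V}
    (hc : G.Connected) (hadj : G.Adj u v) (hnb : ¬ G.IsBridge s(u,v)) :
    (G.deleteEdges {s(u,v)}).Connected := by
  rw [isBridge_iff] at hnb
  push_neg at hnb
  have hr : (G.deleteEdges {s(u,v)}).Reachable u v := hnb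
  haveI := hc.nonempty
  exact Connected.mk fun a b => reachable_transfer hr (hc a b)

lemma reachable_or_of_delete' {G : SimpleGraph V} {u p : V} :
    ∀ {a t : V}, G.Walk a t → t = u →
      (G.deleteEdges {s(u,p)}).Reachable a u ∨ (G.deleteEdges {s(u,p)}).Reachable a p := by
  intro a t w
  induction w with
  | nil => rintro rfl; exact Or.inl (Reachable.refl _)
  | @cons a x c hadj q ih =>
    rintro rfl
    by_cases he : s(a, x) = s(c, p)
    · rw [Sym2.eq_iff] at he
      rcases he with ⟨rfl, rfl⟩ | ⟨rfl, rfl⟩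
      · exact Or.inl (Reachable.refl _)
      · exact Or.inr (Reachable.refl _)
    · have hax : (G.deleteEdges {s(c,p)}).Reachable a x :=
        ⟨Walk.cons (deleteEdges_adj.2 ⟨hadj, he⟩) Walk.nil⟩
      rcases ih rfl with h1 | h1
      · exact Or.inl (hax.trans h1)
      · exact Or.inr (hax.trans h1)

lemma reachable_or_of_delete {G : SimpleGraph V} {u p : V}
    {a : V} (h : G.Reachable a u) :
      (G.deleteEdges {s(u,p)}).Reachable a u ∨ (G.deleteEdges {s(u,p)}).Reachable a p := by
  obtain ⟨w⟩ := h
  exact reachable_or_of_delete' w rfl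

lemma edgeSet_ncard_deleteEdges [Fintype V] {G : SimpleGraph V} {u v : V} (hadj : G.Adj u v) :
    (G.deleteEdges {s(u,v)}).edgeSet.ncard = G.edgeSet.ncard - 1 := by
  rw [edgeSet_deleteEdges]
  exact Set.ncard_diff_singleton_of_mem hadj



lemma ncard_edgeSet_eq_of_isTree [Fintype V] {G : SimpleGraph V} (h : G.IsTree) :
    G.edgeSet.ncard = Fintype.card V - 1 := by
  classical
  haveI : Fintype G.edgeSet := (Set.toFinite G.edgeSet).fintype
  rw [Set.ncard_eq_toFinset_card']
  have := h.card_edgeFinset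
  rw [edgeFinset] at this
  omega

lemma connected_edge_bound [Fintype V] :
    ∀ m : ℕ, ∀ G : SimpleGraph V, G.Connected → G.edgeSet.ncard = m →
      Fintype.card V - 1 ≤ m ∧ (m = Fintype.card V - 1 → G.IsAcyclic) := by
  intro m
  induction m using Nat.strong_induction_on with
  | _ m ih =>
    intro G hc hm
    by_cases hac : G.IsAcyclic
    · have ht : G.IsTree := ⟨hc, hac⟩
      have := ncard_edgeSet_eq_of_isTree ht
      constructor
      · omega
      · intro _; exact hac
    · rw [isAcyclic_iff_forall_adj_isBridge] at hac
      push_neg at hac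
      obtain ⟨u, v, hadj, hnb⟩ := hac
      have hc' := connected_deleteEdges_of_not_isBridge hc hadj hnb
      have hm' := edgeSet_ncard_deleteEdges (G := G) hadj
      have hmem : s(u,v) ∈ G.edgeSet := hadj
      have hpos : 1 ≤ m := by
        rw [← hm]
        have : G.edgeSet.Nonempty := ⟨_, hmem⟩
        have := this.ncard_pos (Set.toFinite _)
        omega
      have := ih (m-1) (by omega) (G.deleteEdges {s(u,v)}) hc' (by rw [hm', hm])
      omega





lemma star_case [Fintype V] {G : SimpleGraph V} (c : V)
    (hstar : ∀ w, w ≠ c → G.Adj c w) (hm : G.edgeSet.ncard = Fintype.card V - 1) :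
    Fintype.card V - 1 ≤ dissocNum G := by
  classical
  set A : Set (Sym2 V) := (fun w => s(c,w)) '' {w | w ≠ c} with hA
  have hAsub : A ⊆ G.edgeSet := by
    rintro e ⟨w, hw, rfl⟩
    exact hstar w hw
  have hAcard : A.ncard = Fintype.card V - 1 := by
    rw [hA, Set.ncard_image_of_injOn]
    · have h1 : {w : V | w ≠ c} = ((univ.erase c : Finset V) : Set V) := by ext x; simp
      rw [h1, Set.ncard_coe_finset, card_erase_of_mem (mem_univ c), card_univ]
    · rintro a ha b hb hab
      rw [Sym2.eq_iff] at hab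
      rcases hab with ⟨-, rfl⟩ | ⟨rfl, h2⟩
      · rfl
      · exact absurd h2 ha
  have hAE : A = G.edgeSet :=
    Set.eq_of_subset_of_ncard_le hAsub (by rw [hAcard, hm]) (Set.toFinite _)
  have hleaf : ∀ w x : V, w ≠ c → x ≠ c → ¬ G.Adj w x := by
    intro w x hw hx hadj
    have hmem : s(w,x) ∈ A := by rw [hAE]; exact hadj
    obtain ⟨y, hy, he⟩ := hmem
    rw [Sym2.eq_iff] at he
    rcases he with ⟨rfl, rfl⟩ | ⟨rfl, rfl⟩
    · exact hw rfl
    · exact hx rfl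
  have hdis : IsDissocSet G (univ.erase c) := by
    intro v hv
    have hvc : v ≠ c := ne_of_mem_erase hv
    have hempty : {u | u ∈ univ.erase c ∧ G.Adj v u} = ∅ := by
      ext x
      simp only [Set.mem_setOf_eq, Set.mem_empty_iff_false, iff_false, not_and]
      intro hx hadj
      exact hleaf v x hvc (ne_of_mem_erase hx) hadj
    rw [hempty]
    simp
  calc Fintype.card V - 1 = (univ.erase c).card := by
        rw [card_erase_of_mem (mem_univ c), card_univ]
    _ ≤ dissocNum G := card_le_dissocNum hdis





lemma tree_ivt [Fintype V] (c : V) :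
    ∀ μ : ℕ, ∀ G : SimpleGraph V, G.Connected → G.edgeSet.ncard = Fintype.card V - 1 →
      {w | w ≠ c ∧ ¬ G.Adj c w}.ncard = μ →
      ∀ t, dissocNum G ≤ t → t ≤ Fintype.card V - 1 →
      ∃ G' : SimpleGraph V, G'.Connected ∧ G'.edgeSet.ncard = Fintype.card V - 1 ∧
        dissocNum G' = t := by
  intro μ
  induction μ using Nat.strong_induction_on with
  | _ μ ih =>
  intro G hc hm hμ t ht1 ht2
  classical
  rcases eq_or_lt_of_le ht1 with heq | hlt
  · exact ⟨G, hc, hm, heq⟩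
  by_cases hμ0 : {w : V | w ≠ c ∧ ¬ G.Adj c w} = ∅
  · have hstar : ∀ w, w ≠ c → G.Adj c w := by
      intro w hw
      by_contra hadj
      have hmemw : w ∈ {w : V | w ≠ c ∧ ¬ G.Adj c w} := ⟨hw, hadj⟩
      rw [hμ0] at hmemw
      exact Set.notMem_empty w hmemw
    have := star_case c hstar hm
    omega
  · obtain ⟨u, huc, hnadj⟩ := Set.nonempty_iff_ne_empty.2 hμ0
    -- find the parent p of u on a path to c
    obtain ⟨w, hw⟩ : ∃ w : G.Walk u c, w.IsPath := by
      obtain ⟨w0⟩ := hc u c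
      exact ⟨w0.toPath, w0.toPath.2⟩
    cases w with
    | nil => exact absurd rfl huc
    | @cons _ p _ hadj q =>
      rw [Walk.cons_isPath_iff] at hw
      obtain ⟨hqpath, husup⟩ := hw
      -- G is acyclic, so s(u,p) is a bridge
      have hac : G.IsAcyclic := (connected_edge_bound _ G hc rfl).2 (by rw [hm])
      have hbridge := (isAcyclic_iff_forall_adj_isBridge.1 hac) hadj
      rw [isBridge_iff] at hbridge
      have hnreach : ¬ (G.deleteEdges {s(u,p)}).Reachable u p := hbridge
      -- q avoids the edge s(u,p)
      have hqavoid : ∀ e ∈ q.edges, e ∉ ({s(u,p)} : Set (Sym2 V)) := by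
        intro e he hmem
        rw [Set.mem_singleton_iff] at hmem
        subst hmem
        exact husup (q.fst_mem_support_of_mem_edges he)
      have hreach_pc : (G.deleteEdges {s(u,p)}).Reachable p c := ⟨q.toDeleteEdges _ hqavoid⟩
      have hsep : ¬ (G.deleteEdges {s(u,p)}).Reachable u c := fun h =>
        hnreach (h.trans hreach_pc.symm)
      have hpc : p ≠ c := by
        rintro rfl
        exact hnadj hadj.symm
      have hcu : ¬ G.Adj u c := fun h => hnadj h.symm
      -- the new graph
      set G' : SimpleGraph V := G.deleteEdges {s(u,p)} ⊔ fromEdgeSet {s(u,c)} with hG'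
      have hle : G.deleteEdges {s(u,p)} ≤ G' := le_sup_left
      have hG'uc : G'.Adj u c := by
        rw [hG', sup_adj, fromEdgeSet_adj]
        exact Or.inr ⟨rfl, huc⟩
      -- connectivity
      have hG'conn : G'.Connected := by
        haveI := hc.nonempty
        have hall : ∀ a : V, G'.Reachable a u := by
          intro a
          rcases reachable_or_of_delete (p := p) (hc a u) with h1 | h1
          · exact h1.mono hle
          · exact ((h1.mono hle).trans (hreach_pc.mono hle)).trans hG'uc.symm.reachable
        exact Connected.mk fun a b => (hall a).trans (hall b).symm
      -- edge count
      have hn2 : 2 ≤ Fintype.card V := Fintype.one_lt_card_iff_nontrivial.2 ⟨⟨u, c, huc⟩⟩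
      have hedge : G'.edgeSet.ncard = Fintype.card V - 1 := by
        rw [hG', edgeSet_sup, edgeSet_fromEdgeSet]
        have hdiag : ({s(u,c)} : Set (Sym2 V)) \ Sym2.diagSet = {s(u,c)} := by
          ext e
          simp only [Set.mem_diff, Set.mem_singleton_iff, Set.mem_setOf_eq, Sym2.mem_diagSet,
            and_iff_left_iff_imp]
          rintro rfl
          simpa using huc
        rw [hdiag, Set.union_singleton, Set.ncard_insert_of_notMem ?notmem (Set.toFinite _),
          edgeSet_ncard_deleteEdges hadj, hm]
        · omega
        case notmem =>
          rw [edgeSet_deleteEdges]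
          rintro ⟨hmem, -⟩
          exact hcu hmem
      -- measure decreases
      have hmeas : {w : V | w ≠ c ∧ ¬ G'.Adj c w}.ncard < μ := by
        rw [← hμ]
        apply Set.ncard_lt_ncard _ (Set.toFinite _)
        constructor
        · rintro x ⟨hx1, hx2⟩
          refine ⟨hx1, fun hadjx => hx2 ?_⟩
          refine Or.inl (deleteEdges_adj.2 ⟨hadjx, ?_⟩)
          rw [Set.mem_singleton_iff, Sym2.eq_iff]
          rintro (⟨rfl, rfl⟩ | ⟨rfl, rfl⟩)
          · exact huc rfl
          · exact hpc rfl
        · intro hsub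
          have hu' := hsub ⟨huc, hnadj⟩
          exact hu'.2 hG'uc.symm
      -- dissociation number bound
      have hdn : dissocNum G' ≤ t := by
        calc dissocNum G' ≤ dissocNum (G.deleteEdges {s(u,p)}) := dissocNum_mono hle
          _ ≤ dissocNum G + 1 := dissocNum_deleteEdges_le G u p
          _ ≤ t := by omega
      exact ih _ hmeas G' hG'conn hedge rfl t hdn ht2





lemma ncard_le_one_eq {α : Type*} {s : Set α} (hfin : s.Finite) (h : s.ncard ≤ 1) {a b : α}
    (ha : a ∈ s) (hb : b ∈ s) : a = b := by
  by_contra hne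
  have hsub : ({a, b} : Set α) ⊆ s := by rintro x (rfl | rfl) <;> assumption
  have h2 : ({a, b} : Set α).ncard = 2 := Set.ncard_pair hne
  have := Set.ncard_le_ncard hsub hfin
  omega

lemma exists_adj_of_reachable_ne {G : SimpleGraph V} :
    ∀ {u v : V}, G.Reachable u v → u ≠ v → ∃ a b : V, G.Adj a b := by
  intro u v h hne
  obtain ⟨w⟩ := h
  cases w with
  | nil => exact absurd rfl hne
  | cons h _ => exact ⟨_, _, h⟩

lemma pair_dissoc [DecidableEq V] {G : SimpleGraph V} {a b : V} (hadj : G.Adj a b) :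
    IsDissocSet G {a, b} := by
  intro v hv
  rw [Finset.mem_insert, Finset.mem_singleton] at hv
  have hab := hadj.ne
  rcases hv with rfl | rfl
  · refine le_trans (Set.ncard_le_ncard (t := {b}) ?_ (Set.finite_singleton b)) ?_
    · rintro x ⟨hx, hadjx⟩
      rw [Finset.mem_insert, Finset.mem_singleton] at hx
      rcases hx with rfl | rfl
      · exact absurd hadjx (G.irrefl)
      · rfl
    · simp
  · refine le_trans (Set.ncard_le_ncard (t := {a}) ?_ (Set.finite_singleton a)) ?_
    · rintro x ⟨hx, hadjx⟩
      rw [Finset.mem_insert, Finset.mem_singleton] at hx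
      rcases hx with rfl | rfl
      · rfl
      · exact absurd hadjx (G.irrefl)
    · simp

lemma singleton_dissoc (G : SimpleGraph V) (v : V) : IsDissocSet G {v} := by
  intro w hw
  rw [Finset.mem_singleton] at hw
  subst hw
  have : {u | u ∈ ({w} : Finset V) ∧ G.Adj w u} = ∅ := by
    ext x
    simp only [Finset.mem_singleton, Set.mem_setOf_eq, Set.mem_empty_iff_false, iff_false,
      not_and]
    rintro rfl
    exact fun h => G.irrefl h
  rw [this]
  simp

lemma univ_closed {G : SimpleGraph V} [Fintype V] {u v : V} (hadj : G.Adj u v)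
    (hdis : IsDissocSet G Finset.univ) :
    ∀ {a b : V}, G.Walk a b → (a = u ∨ a = v) → (b = u ∨ b = v) := by
  intro a b w
  induction w with
  | nil => exact id
  | @cons a x c hadj' q ih =>
    intro ha
    apply ih
    rcases ha with rfl | rfl
    · have h1 := hdis a (Finset.mem_univ a)
      exact Or.inr (ncard_le_one_eq (Set.toFinite _) h1 ⟨Finset.mem_univ x, hadj'⟩ ⟨Finset.mem_univ v, hadj⟩)
    · have h1 := hdis a (Finset.mem_univ a)
      exact Or.inl (ncard_le_one_eq (Set.toFinite _) h1 ⟨Finset.mem_univ x, hadj'⟩ ⟨Finset.mem_univ u, hadj.symm⟩)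





lemma main_aux {n kk : ℕ} (hk : kk + 1 ≤ n - 1) :
    ∀ m : ℕ, ∀ G : SimpleGraph (Fin n), G.Connected → dissocNum G = kk →
      G.edgeSet.ncard = m →
      sInf {m | ∃ G2 : SimpleGraph (Fin n), G2.Connected ∧ dissocNum G2 = kk + 1 ∧
        Nat.card G2.edgeSet = m} ≤ m := by
  intro m
  induction m using Nat.strong_induction_on with
  | _ m ih =>
  intro G hc hdk hm
  by_cases hac : G.IsAcyclic
  · have hn1 : G.edgeSet.ncard = Fintype.card (Fin n) - 1 :=
      ncard_edgeSet_eq_of_isTree ⟨hc, hac⟩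
    have c : Fin n := hc.nonempty.some
    obtain ⟨G', hG'c, hG'm, hG'd⟩ := tree_ivt c _ G hc hn1 rfl (kk+1)
      (by rw [hdk]; omega) (by rw [Fintype.card_fin]; exact hk)
    have hmem : (n - 1) ∈ {m | ∃ G2 : SimpleGraph (Fin n), G2.Connected ∧
        dissocNum G2 = kk + 1 ∧ Nat.card G2.edgeSet = m} :=
      ⟨G', hG'c, hG'd, by rw [Nat.card_coe_set_eq, hG'm, Fintype.card_fin]⟩
    have h1 := Nat.sInf_le hmem
    have h2 : m = n - 1 := by rw [← hm, hn1, Fintype.card_fin]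
    omega
  · rw [isAcyclic_iff_forall_adj_isBridge] at hac
    push_neg at hac
    obtain ⟨u, v, hadj, hnb⟩ := hac
    have hc' := connected_deleteEdges_of_not_isBridge hc hadj hnb
    have hm' : (G.deleteEdges {s(u,v)}).edgeSet.ncard = m - 1 := by
      rw [edgeSet_ncard_deleteEdges hadj, hm]
    have hpos : 1 ≤ m := by
      have : G.edgeSet.Nonempty := ⟨s(u,v), G.mem_edgeSet.mpr hadj⟩
      have := this.ncard_pos (Set.toFinite _)
      omega
    have hlow : kk ≤ dissocNum (G.deleteEdges {s(u,v)}) := by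
      rw [← hdk]; exact dissocNum_mono (deleteEdges_le _)
    have hhigh : dissocNum (G.deleteEdges {s(u,v)}) ≤ kk + 1 := by
      rw [← hdk] at *; exact dissocNum_deleteEdges_le G u v
    rcases eq_or_lt_of_le hhigh with heq | hlt
    · have hmem : (m - 1) ∈ {m | ∃ G2 : SimpleGraph (Fin n), G2.Connected ∧
          dissocNum G2 = kk + 1 ∧ Nat.card G2.edgeSet = m} :=
        ⟨_, hc', heq, by rw [Nat.card_coe_set_eq, hm']⟩
      have := Nat.sInf_le hmem
      omega
    · have hdk' : dissocNum (G.deleteEdges {s(u,v)}) = kk := by omega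
      have := ih (m-1) (by omega) _ hc' hdk' hm'
      omega

theorem stmt6 (n k : ℕ) (G1 : SimpleGraph (Fin n)) (hc : G1.Connected)
    (hd : dissocNum G1 = k)
    (hne : ∃ G2 : SimpleGraph (Fin n), G2.Connected ∧ dissocNum G2 = k + 1) :
    sInf {m | ∃ G2 : SimpleGraph (Fin n), G2.Connected ∧ dissocNum G2 = k + 1 ∧
      Nat.card G2.edgeSet = m} ≤ Nat.card G1.edgeSet := by
  obtain ⟨H, hHc, hHd⟩ := hne
  haveI : Nonempty (Fin n) := hc.nonempty
  have hn1 : 1 ≤ n := by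
    have := Fintype.card_pos (α := Fin n)
    simp at this; omega
  -- k ≥ 1
  have hk1 : 1 ≤ k := by
    rw [← hd]
    have := card_le_dissocNum (singleton_dissoc G1 (Classical.arbitrary (Fin n)))
    simpa using this
  -- k + 1 ≤ n
  have hkn : k + 1 ≤ n := by
    have := dissocNum_le_card H
    rw [hHd, Fintype.card_fin] at this
    exact this
  -- if n ≥ 2 then k ≥ 2
  have hk2 : 2 ≤ n → 2 ≤ k := by
    intro hn2
    have hne01 : (⟨0, by omega⟩ : Fin n) ≠ ⟨1, by omega⟩ := by
      intro h
      simpa using congrArg Fin.val h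
    obtain ⟨a, b, hab⟩ := exists_adj_of_reachable_ne (hc _ _) hne01
    have := card_le_dissocNum (pair_dissoc hab)
    rw [hd] at this
    rwa [Finset.card_pair hab.ne] at this
  -- k + 1 ≠ n
  have hkne : k + 1 ≠ n := by
    intro hkn'
    have hn2 : 2 ≤ n := by omega
    have hn3 : 3 ≤ n := by have := hk2 hn2; omega
    obtain ⟨S, hS, hScard⟩ := exists_dissoc_card_eq H
    rw [hHd, hkn'] at hScard
    have hSuniv : S = Finset.univ := Finset.eq_univ_of_card S (by rw [hScard]; simp)
    rw [hSuniv] at hS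
    have hne01 : (⟨0, by omega⟩ : Fin n) ≠ ⟨1, by omega⟩ := by
      intro h
      simpa using congrArg Fin.val h
    obtain ⟨a, b, hab⟩ := exists_adj_of_reachable_ne (hHc _ _) hne01
    obtain ⟨w, hwa, hwb⟩ : ∃ w : Fin n, w ≠ a ∧ w ≠ b := by
      by_contra hcon
      push_neg at hcon
      have hsub : (Finset.univ : Finset (Fin n)) ⊆ {a, b} := by
        intro x _
        rcases eq_or_ne x a with rfl | h
        · exact Finset.mem_insert_self _ _
        · rw [hcon x h]
          exact Finset.mem_insert_of_mem (Finset.mem_singleton_self b)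
      have h1 := Finset.card_le_card hsub
      have h2 : ({a, b} : Finset (Fin n)).card ≤ 2 :=
        le_trans (Finset.card_insert_le _ _) (by simp)
      rw [Finset.card_univ, Fintype.card_fin] at h1
      omega
    obtain ⟨wk⟩ := hHc a w
    rcases univ_closed hab hS wk (Or.inl rfl) with rfl | rfl
    · exact hwa rfl
    · exact hwb rfl
  have hfin : k + 1 ≤ n - 1 := by omega
  have := main_aux hfin (G1.edgeSet.ncard) G1 hc hd rfl
  rwa [Nat.card_coe_set_eq]
end

section
/- Every tree $T$ on $n$ vertices has dissociation number $\tau(T) \ge \lceil 2n/3 \rceil$. -/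
open SimpleGraph Finset

/-!
Induction on the number of vertices, peeling off the end of a longest path. If `u w …` is a
longest path of a forest, then `u` is a leaf hanging at `w`, and so is every further neighbour
`y` of `w` off the path. If such a `y` exists, delete `{w, u, y}` and keep the two leaves `u, y`;
otherwise `w` has degree at most two, and deleting `w`, `u` and the next vertex `x` of the path
while keeping the edge `u w` works. Either way at least two thirds of the deleted vertices are
kept, and nothing kept is adjacent to the rest of the forest.
-/

section

variable {V : Type*} {G : SimpleGraph V}

lemma isDissocSet_pair [DecidableEq V] (a b : V) : IsDissocSet G {a, b} := by
  intro v hv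
  rw [Set.ncard_le_one_iff]
  rintro x y ⟨hx, hvx⟩ ⟨hy, hvy⟩
  simp only [mem_insert, mem_singleton] at hv hx hy
  rcases hv with rfl | rfl <;> rcases hx with rfl | rfl <;> rcases hy with rfl | rfl <;>
    simp_all

lemma IsDissocSet.union [DecidableEq V] {S T : Finset V} (hS : IsDissocSet G S)
    (hT : IsDissocSet G T) (hST : ∀ v ∈ S, ∀ w ∈ T, ¬ G.Adj v w) :
    IsDissocSet G (S ∪ T) := by
  intro v hv
  rcases mem_union.1 hv with hv | hv
  · convert hS v hv using 2
    ext x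
    simp only [mem_union, Set.mem_ofPred_eq]
    exact ⟨fun ⟨hx, hvx⟩ => ⟨hx.resolve_right fun hxT => hST v hv x hxT hvx, hvx⟩,
      fun ⟨hx, hvx⟩ => ⟨Or.inl hx, hvx⟩⟩
  · convert hT v hv using 2
    ext x
    simp only [mem_union, Set.mem_ofPred_eq]
    exact ⟨fun ⟨hx, hvx⟩ => ⟨hx.resolve_left fun hxS => hST x hxS v hv hvx.symm, hvx⟩,
      fun ⟨hx, hvx⟩ => ⟨Or.inr hx, hvx⟩⟩

lemma le_dissocNum [Fintype V] {S : Finset V} (hS : IsDissocSet G S) : #S ≤ dissocNum G :=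
  le_csSup ⟨Fintype.card V, by rintro k ⟨S, -, rfl⟩; exact card_le_univ S⟩ ⟨S, hS, rfl⟩

def IsLongestPathIn (G : SimpleGraph V) (s : Finset V) {u v : V} (p : G.Walk u v) : Prop :=
  p.IsPath ∧ (∀ x ∈ p.support, x ∈ s) ∧
    ∀ (a b : V) (q : G.Walk a b), q.IsPath → (∀ x ∈ q.support, x ∈ s) → q.length ≤ p.length

lemma exists_isLongestPathIn [Fintype V] {s : Finset V} (hs : s.Nonempty) :
    ∃ (u v : V) (p : G.Walk u v), IsLongestPathIn G s p := by
  set P : Set ℕ := {k | ∃ (u v : V) (p : G.Walk u v),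
    p.IsPath ∧ (∀ x ∈ p.support, x ∈ s) ∧ p.length = k}
  obtain ⟨x, hx⟩ := hs
  have hP : P.Nonempty := ⟨0, x, x, .nil, by simp, by simpa using hx, rfl⟩
  have hbdd : BddAbove P :=
    ⟨Fintype.card V, by rintro _ ⟨u, v, p, hp, -, rfl⟩; exact hp.length_lt.le⟩
  obtain ⟨u, v, p, hp, hps, hlen⟩ := Nat.sSup_mem hP hbdd
  exact ⟨u, v, p, hp, hps, fun a b q hq hqs =>
    hlen ▸ le_csSup hbdd ⟨a, b, q, hq, hqs, rfl⟩⟩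

lemma IsLongestPathIn.eq_snd_of_adj_start {s : Finset V} {u v : V} {p : G.Walk u v}
    (hG : G.IsAcyclic) (hp : IsLongestPathIn G s p) {y : V} (hys : y ∈ s) (hadj : G.Adj u y) :
    y = p.snd := by
  by_cases hy : y ∈ p.support
  · exact hG.eq_snd_of_adj_start hp.1 hadj hy
  · have hlong :=
      hp.2.2 _ _ (.cons hadj.symm p) (hp.1.cons hy) (by simpa using ⟨hys, hp.2.1⟩)
    simp at hlong

lemma IsLongestPathIn.cons_of_adj {s : Finset V} {u v w : V} {h : G.Adj u w} {p : G.Walk w v}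
    (hp : IsLongestPathIn G s (.cons h p)) {y : V} (hys : y ∈ s) (hadj : G.Adj y w)
    (hy : y ∉ p.support) : IsLongestPathIn G s (.cons hadj p) := by
  obtain ⟨hpath, hsupp, hmax⟩ := hp
  refine ⟨hpath.of_cons.cons hy, ?_, fun a b q hq hqs => by simpa using hmax a b q hq hqs⟩
  simp only [Walk.support_cons, List.mem_cons, forall_eq_or_imp] at hsupp ⊢
  exact ⟨hys, hsupp.2⟩

/-- Deleting `A` from `s` and adding `D` to a dissociation set of what is left gives a
dissociation set of `s`, with at least two thirds of the vertices of `A` kept. -/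
structure IsDissocPiece (G : SimpleGraph V) (s A D : Finset V) : Prop where
  subset : D ⊆ A
  subset_of : A ⊆ s
  nonempty : D.Nonempty
  two_mul_card_le : 2 * #A ≤ 3 * #D
  mem_of_adj : ∀ v ∈ D, ∀ x ∈ s, G.Adj v x → x ∈ A
  isDissocSet : IsDissocSet G D

lemma isDissocPiece_triple [DecidableEq V] {s : Finset V} {a b c : V} (ha : a ∈ s) (hb : b ∈ s)
    (hc : c ∈ s) (hbc : b ≠ c) (hadj : ∀ v ∈ ({b, c} : Finset V), ∀ x ∈ s, G.Adj v x →
      x ∈ ({a, b, c} : Finset V)) : IsDissocPiece G s {a, b, c} {b, c} where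
  subset := by intro; simp only [mem_insert, mem_singleton]; tauto
  subset_of := by
    intro x; simp only [mem_insert, mem_singleton]; rintro (rfl | rfl | rfl) <;> assumption
  nonempty := insert_nonempty b {c}
  two_mul_card_le := by
    rw [card_pair hbc]
    have := card_le_three (a := a) (b := b) (c := c)
    omega
  mem_of_adj := hadj
  isDissocSet := isDissocSet_pair b c

lemma exists_isDissocPiece [Fintype V] [DecidableEq V] (hG : G.IsAcyclic) {s : Finset V}
    (hs : s.Nonempty) : ∃ A D, IsDissocPiece G s A D := by
  obtain ⟨u, v, p, hp⟩ := exists_isLongestPathIn (G := G) hs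
  have hu : ∀ y ∈ s, G.Adj u y → y = p.snd := fun _ hys hadj =>
    hp.eq_snd_of_adj_start hG hys hadj
  have hus : u ∈ s := hp.2.1 u p.start_mem_support
  cases p with
  | nil =>
    refine ⟨{u}, {u}, subset_rfl, by simpa, by simp, by simp, ?_,
      by simpa using isDissocSet_pair u u⟩
    rintro x hx y hys hadj
    rw [mem_singleton] at hx
    subst hx
    exact absurd (hu y hys hadj) (by simpa using hadj.ne')
  | @cons _ w _ huw p' =>
    simp only [Walk.snd_cons] at hu
    have hws : w ∈ s := hp.2.1 w (by simp)
    by_cases hbranch : ∃ y ∈ s, G.Adj w y ∧ y ≠ u ∧ y ∉ p'.support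
    · obtain ⟨y, hys, hwy, hyu, hyp⟩ := hbranch
      have hy : ∀ z ∈ s, G.Adj y z → z = w := fun z hzs hadj => by
        simpa using (hp.cons_of_adj hys hwy.symm hyp).eq_snd_of_adj_start hG hzs hadj
      refine ⟨_, _, isDissocPiece_triple hws hus hys hyu.symm ?_⟩
      intro x hx z hzs hadj
      simp only [mem_insert, mem_singleton] at hx
      rcases hx with rfl | rfl
      · simp [hu z hzs hadj]
      · simp [hy z hzs hadj]
    · push Not at hbranch
      have hw : ∀ z ∈ s, G.Adj w z → z = u ∨ z = p'.snd := fun z hzs hadj =>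
        or_iff_not_imp_left.2 fun hzu =>
          hG.eq_snd_of_adj_start hp.1.of_cons hadj (hbranch z hzs hadj hzu)
      refine ⟨_, _, isDissocPiece_triple (hp.2.1 p'.snd (by simp)) hus hws huw.ne ?_⟩
      intro x hx z hzs hadj
      simp only [mem_insert, mem_singleton] at hx
      rcases hx with rfl | rfl
      · simp [hu z hzs hadj]
      · rcases hw z hzs hadj with rfl | rfl <;> simp

theorem SimpleGraph.IsAcyclic.exists_isDissocSet_subset [Fintype V] [DecidableEq V]
    (hG : G.IsAcyclic) (s : Finset V) : ∃ S ⊆ s, IsDissocSet G S ∧ 2 * #s ≤ 3 * #S := by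
  induction s using Finset.strongInduction with
  | H s ih =>
  rcases s.eq_empty_or_nonempty with rfl | hs
  · exact ⟨∅, by simp, by simp [IsDissocSet], by simp⟩
  obtain ⟨A, D, hAD⟩ := exists_isDissocPiece hG hs
  obtain ⟨S, hSs, hS, hcard⟩ :=
    ih (s \ A) (sdiff_ssubset hAD.subset_of (hAD.nonempty.mono hAD.subset))
  have hSA : ∀ v ∈ S, v ∈ s ∧ v ∉ A := fun v hv => mem_sdiff.1 (hSs hv)
  have hdisj : Disjoint S D :=
    Finset.disjoint_left.2 fun v hvS hvD => (hSA v hvS).2 (hAD.subset hvD)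
  refine ⟨S ∪ D, union_subset (hSs.trans sdiff_subset) (hAD.subset.trans hAD.subset_of),
    hS.union hAD.isDissocSet fun v hv w hw hvw =>
      (hSA v hv).2 (hAD.mem_of_adj w hw v (hSA v hv).1 hvw.symm), ?_⟩
  have := card_sdiff_add_card_eq_card hAD.subset_of
  have := hAD.two_mul_card_le
  rw [card_union_of_disjoint hdisj]
  omega

end

theorem stmt8 {V : Type*} [Fintype V] (T : SimpleGraph V) (h : T.IsTree) :
    ⌈(2 * Fintype.card V : ℚ) / 3⌉₊ ≤ dissocNum T := by
  classical
  obtain ⟨S, -, hS, hcard⟩ := h.isAcyclic.exists_isDissocSet_subset univ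
  have hle := le_dissocNum hS
  rw [card_univ] at hcard
  rw [Nat.ceil_le, div_le_iff₀ (by norm_num)]
  exact_mod_cast (by omega : 2 * Fintype.card V ≤ dissocNum T * 3)
end

section
/- Let $T$ be any tree on $3k$ vertices obtained by taking $k$ vertex-disjoint copies of the path $P_3$ and connecting them into a tree using $k-1$ additional edges. Then the dissociation number of $T$ equals $2k$. -/
open SimpleGraph Finset

/-!
Root the tree at any vertex `r`. In each copy `a - b - c` of `P₃`, `a` and `c` cannot both be
parents of `b`, so exactly one vertex of the copy, its gate, has its parent outside the copy.
Deleting all gates leaves `2k` vertices, and an edge between two of them joins a vertex to its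
parent, hence lies inside one copy: every remaining vertex has at most one remaining neighbour.
Conversely a dissociation set cannot contain a whole copy, since the middle vertex would have two
neighbours in it.
-/

namespace SimpleGraph

variable {V : Type*} {G : SimpleGraph V}

lemma Walk.dist_lt_length_of_mem_support {u v w : V} (p : G.Walk u v) (hw : w ∈ p.support)
    (hwv : w ≠ v) : G.dist u w < p.length := by
  classical
  exact (dist_le (p.takeUntil w hw)).trans_lt (p.length_takeUntil_lt_length hw hwv)

lemma IsTree.eq_penultimate_of_adj_of_dist_lt (hG : G.IsTree) {r u v : V} (p : G.Walk r v)
    (hp : p.length = G.dist r v) (hadj : G.Adj v u) (hd : G.dist r u < G.dist r v) :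
    u = p.penultimate := by
  obtain ⟨q, hq, hql⟩ := (hG.connected r u).exists_path_of_dist
  have hv : v ∉ q.support := fun hv =>
    (q.dist_lt_length_of_mem_support hv hadj.ne).not_ge (hql ▸ hd.le)
  exact hG.isAcyclic.eq_penultimate_of_adj_end (p.isPath_of_length_eq_dist hp) hadj
    (hG.isAcyclic.mem_support_of_ne_mem_support_of_adj_of_isPath
      (p.isPath_of_length_eq_dist hp) hq hadj hv)

lemma IsTree.eq_of_adj_of_dist_lt (hG : G.IsTree) {r u u' v : V} (hu : G.Adj v u)
    (hu' : G.Adj v u') (hd : G.dist r u < G.dist r v) (hd' : G.dist r u' < G.dist r v) :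
    u = u' := by
  obtain ⟨p, hp⟩ := (hG.connected r v).exists_walk_length_eq_dist
  rw [hG.eq_penultimate_of_adj_of_dist_lt p hp hu hd,
    hG.eq_penultimate_of_adj_of_dist_lt p hp hu' hd']

lemma IsTree.exists_gate_of_path3 (hG : G.IsTree) (r : V) (f : Fin 3 → V)
    (h01 : G.Adj (f 0) (f 1)) (h12 : G.Adj (f 1) (f 2)) (h02 : f 0 ≠ f 2) :
    ∃ t, ∀ s ≠ t, ∃ s', G.Adj (f s) (f s') ∧ G.dist r (f s') < G.dist r (f s) := by
  rcases (hG.dist_ne_of_adj r h01).lt_or_gt with h01' | h01' <;>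
    rcases (hG.dist_ne_of_adj r h12).lt_or_gt with h12' | h12'
  · refine ⟨0, fun s hs => ?_⟩
    fin_cases s
    exacts [absurd rfl hs, ⟨0, h01.symm, h01'⟩, ⟨1, h12.symm, h12'⟩]
  · exact absurd (hG.eq_of_adj_of_dist_lt h01.symm h12 h01' h12') h02
  · refine ⟨1, fun s hs => ?_⟩
    fin_cases s
    exacts [⟨1, h01, h01'⟩, absurd rfl hs, ⟨1, h12.symm, h12'⟩]
  · refine ⟨2, fun s hs => ?_⟩
    fin_cases s
    exacts [⟨1, h01, h01'⟩, ⟨2, h12, h12'⟩, absurd rfl hs]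

end SimpleGraph

lemma isDissocSet_iff {V : Type*} {G : SimpleGraph V} {S : Finset V} :
    IsDissocSet G S ↔
      ∀ v ∈ S, ∀ u ∈ S, ∀ w ∈ S, G.Adj v u → G.Adj v w → u = w := by
  refine forall₂_congr fun v _ => ?_
  rw [Set.ncard_le_one_iff ((S.finite_toSet).subset fun u hu => hu.1)]
  exact ⟨fun h u hu w hw hvu hvw => h ⟨hu, hvu⟩ ⟨hw, hvw⟩,
    fun h u w hu hw => h u hu.1 w hw.1 hu.2 hw.2⟩

lemma card_eq_sum_card_blocks {ι κ V : Type*} [Fintype ι] [Fintype κ] [Fintype V]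
    [DecidableEq V] (e : ι × κ ≃ V) (S : Finset V) : #S = ∑ i, #{t | e (i, t) ∈ S} := by
  simp only [card_filter, ← Fintype.sum_prod_type',
    Equiv.sum_comp e (fun v => if v ∈ S then 1 else 0)]
  simp

section Blocks

variable {ι V : Type*} [Fintype ι] [Fintype V] {G : SimpleGraph V} (e : ι × Fin 3 ≃ V)

lemma IsDissocSet.card_le_of_path3_blocks
    (hP : ∀ i, G.Adj (e (i, 0)) (e (i, 1)) ∧ G.Adj (e (i, 1)) (e (i, 2)))
    {S : Finset V} (hS : IsDissocSet G S) : #S ≤ 2 * Fintype.card ι := by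
  classical
  have block_card_le : ∀ i, #{t | e (i, t) ∈ S} ≤ 2 := by
    intro i
    by_contra! h3
    have hall : ∀ t, e (i, t) ∈ S := by
      have : #{t | e (i, t) ∈ S} = #(univ : Finset (Fin 3)) :=
        le_antisymm (card_le_card (subset_univ _)) (by simpa [Nat.succ_le_iff] using h3)
      simpa [filter_eq_self] using eq_univ_of_card _ this
    have h_eq := isDissocSet_iff.mp hS _ (hall 1) _ (hall 0) _ (hall 2) (hP i).1.symm (hP i).2
    simp at h_eq
  calc #S = ∑ i, #{t | e (i, t) ∈ S} := card_eq_sum_card_blocks e S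
    _ ≤ ∑ _i : ι, 2 := sum_le_sum fun i _ => block_card_le i
    _ = 2 * Fintype.card ι := by simp [mul_comm]

lemma SimpleGraph.IsTree.exists_isDissocSet_card_eq_of_path3_blocks (hG : G.IsTree)
    (hP : ∀ i, G.Adj (e (i, 0)) (e (i, 1)) ∧ G.Adj (e (i, 1)) (e (i, 2))) :
    ∃ S, IsDissocSet G S ∧ #S = 2 * Fintype.card ι := by
  classical
  obtain ⟨r⟩ := hG.connected.nonempty
  have h02 : ∀ i, e (i, 0) ≠ e (i, 2) := fun i h => by simpa using e.injective h
  choose g hg using fun i =>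
    hG.exists_gate_of_path3 r (fun t => e (i, t)) (hP i).1 (hP i).2 (h02 i)
  set S : Finset V := {v | (e.symm v).2 ≠ g (e.symm v).1}
  have mem_S : ∀ i t, e (i, t) ∈ S ↔ t ≠ g i := by simp [S]
  have parent_mem_block : ∀ i s w, e (i, s) ∈ S → G.Adj (e (i, s)) w →
      G.dist r w < G.dist r (e (i, s)) → ∃ t, w = e (i, t) := by
    intro i s w hs hw hd
    obtain ⟨t, ht, htd⟩ := hg i s ((mem_S i s).mp hs)
    exact ⟨t, hG.eq_of_adj_of_dist_lt hw ht hd htd⟩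
  have adj_mem_block : ∀ i s w, e (i, s) ∈ S → w ∈ S → G.Adj (e (i, s)) w →
      ∃ t, w = e (i, t) := by
    intro i s w hs hw hadj
    rcases (hG.dist_ne_of_adj r hadj).lt_or_gt with hd | hd
    · obtain ⟨⟨j, t⟩, rfl⟩ := e.surjective w
      obtain ⟨s', hs'⟩ := parent_mem_block j t _ hw hadj.symm hd
      obtain ⟨rfl, -⟩ := Prod.ext_iff.mp (e.injective hs')
      exact ⟨t, rfl⟩
    · exact parent_mem_block i s w hs hadj hd
  refine ⟨S, isDissocSet_iff.mpr fun v hv u hu w hw hvu hvw => ?_, ?_⟩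
  · obtain ⟨⟨i, s⟩, rfl⟩ := e.surjective v
    obtain ⟨t, rfl⟩ := adj_mem_block i s u hv hu hvu
    obtain ⟨t', rfl⟩ := adj_mem_block i s w hv hw hvw
    rw [mem_S] at hv hu hw
    have hts : t ≠ s := fun h => hvu.ne (by rw [h])
    have hts' : t' ≠ s := fun h => hvw.ne (by rw [h])
    rw [show t = t' by omega]
  · simp [card_eq_sum_card_blocks e, mem_S, filter_ne', mul_comm]

end Blocks

lemma dissocNum_eq_of_isGreatest {V : Type*} [Fintype V] {G : SimpleGraph V} {m : ℕ}
    (hS : ∃ S, IsDissocSet G S ∧ #S = m) (hle : ∀ S, IsDissocSet G S → #S ≤ m) :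
    dissocNum G = m :=
  IsGreatest.csSup_eq ⟨hS, by rintro _ ⟨S, hS, rfl⟩; exact hle S hS⟩

theorem stmt9_general (k : ℕ) (T : SimpleGraph (Fin (3 * k))) (ht : T.IsTree)
    (e : Fin k × Fin 3 ≃ Fin (3 * k))
    (hP : ∀ i : Fin k, T.Adj (e (i, 0)) (e (i, 1)) ∧ T.Adj (e (i, 1)) (e (i, 2))) :
    dissocNum T = 2 * k := by
  simpa using dissocNum_eq_of_isGreatest (ht.exists_isDissocSet_card_eq_of_path3_blocks e hP)
    fun S hS => hS.card_le_of_path3_blocks e hP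

theorem stmt9 (k : ℕ) (hk : 1 ≤ k) (T : SimpleGraph (Fin (3 * k))) (ht : T.IsTree)
    (e : Fin k × Fin 3 ≃ Fin (3 * k))
    (hP : ∀ i : Fin k, T.Adj (e (i, 0)) (e (i, 1)) ∧ T.Adj (e (i, 1)) (e (i, 2))) :
    dissocNum T = 2 * k :=
  stmt9_general k T ht e hP
end

section
/- Let $H$ be a graph with two vertices $u, v$, and let $H_{v \to u}$ be obtained from $H$ by the Kelmans operation: for every vertex $x \ne u$ adjacent to $v$ but not to $u$, delete the edge $vx$ and add the edge $ux$. Then the spectral radius satisfies $\rho(H) \le \rho(H_{v \to u})$. -/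
open SimpleGraph Finset

open scoped Classical in
/-- The largest adjacency eigenvalue (spectral radius) of a graph. -/
noncomputable def specRad {V : Type*} [Fintype V] (G : SimpleGraph V) : ℝ :=
  sSup {x : ℝ | ∃ f : V → ℝ, f ≠ 0 ∧ (G.adjMatrix ℝ).mulVec f = x • f}

/-- The Kelmans operation from `v` to `u`: each neighbor of `v` that is neither `u`
nor a neighbor of `u` is shifted to be a neighbor of `u` instead. -/
def kelmans {V : Type*} (H : SimpleGraph V) (u v : V) : SimpleGraph V :=
  SimpleGraph.fromRel (fun x y =>
    (H.Adj x y ∧ x ≠ v ∧ y ≠ v) ∨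
    (x = v ∧ H.Adj v y ∧ (y = u ∨ H.Adj u y)) ∨
    (x = u ∧ y ≠ v ∧ H.Adj v y ∧ ¬ H.Adj u y))


set_option linter.unusedSectionVars false
set_option maxHeartbeats 1000000

section SpecAux
open Matrix
variable {V : Type*} [Fintype V] [DecidableEq V] [Nonempty V]

noncomputable def eigSet (A : Matrix V V ℝ) : Set ℝ :=
  {x : ℝ | ∃ f : V → ℝ, f ≠ 0 ∧ A.mulVec f = x • f}

lemma dot_eq_inner (f g : V → ℝ) :
    f ⬝ᵥ g = (inner ℝ ((WithLp.equiv 2 (V → ℝ)).symm f) ((WithLp.equiv 2 (V → ℝ)).symm g) : ℝ) := by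
  simp [PiLp.inner_apply, RCLike.inner_apply, dotProduct]
  exact Finset.sum_congr rfl fun i _ => mul_comm _ _

lemma sSup_eigSet_spec (A : Matrix V V ℝ) (hA : A.IsHermitian) :
    (∃ f : V → ℝ, f ≠ 0 ∧ A.mulVec f = (sSup (eigSet A)) • f) ∧
    ∀ g : V → ℝ, g ⬝ᵥ A *ᵥ g ≤ sSup (eigSet A) * (g ⬝ᵥ g) := by
  have hS : (Matrix.toEuclideanLin A).IsSymmetric :=
    (Matrix.isHermitian_iff_isSymmetric).mp hA
  set n := Fintype.card V with hncard
  have hn : Module.finrank ℝ (EuclideanSpace ℝ V) = n := finrank_euclideanSpace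
  have hnpos : 0 < n := Fintype.card_pos
  haveI : Nonempty (Fin n) := ⟨⟨0, hnpos⟩⟩
  set T := Matrix.toEuclideanLin A with hT
  set b := hS.eigenvectorBasis hn with hb
  set lam := hS.eigenvalues hn with hlam
  obtain ⟨i₀, hi₀⟩ := Finite.exists_max lam
  set μ := lam i₀ with hμ
  -- translation: mulVec vs T
  have hTapp : ∀ x : EuclideanSpace ℝ V,
      T x = (WithLp.equiv 2 (V → ℝ)).symm (A *ᵥ (WithLp.equiv 2 (V → ℝ)) x) := by
    intro x; simp [hT, Matrix.toEuclideanLin_apply]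
  -- Rayleigh bound
  have rayleigh : ∀ g : V → ℝ, g ⬝ᵥ A *ᵥ g ≤ μ * (g ⬝ᵥ g) := by
    intro g
    set x : EuclideanSpace ℝ V := (WithLp.equiv 2 (V → ℝ)).symm g with hx
    have h1 : g ⬝ᵥ A *ᵥ g = (inner ℝ x (T x) : ℝ) := by
      rw [dot_eq_inner, hTapp]
      rfl
    have h2 : g ⬝ᵥ g = (inner ℝ x x : ℝ) := dot_eq_inner g g
    rw [h1, h2]
    have e1 : (inner ℝ x (T x) : ℝ) = ∑ i, (b.repr x i) * (b.repr (T x) i) := by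
      rw [← b.repr.inner_map_map x (T x)]
      simp only [PiLp.inner_apply, RCLike.inner_apply, starRingEnd_apply, star_trivial]
      exact Finset.sum_congr rfl fun i _ => mul_comm _ _
    have e2 : (inner ℝ x x : ℝ) = ∑ i, (b.repr x i) ^ 2 := by
      rw [← b.repr.inner_map_map x x]
      simp only [PiLp.inner_apply, RCLike.inner_apply, starRingEnd_apply, star_trivial, sq]
    rw [e1, e2, Finset.mul_sum]
    apply Finset.sum_le_sum
    intro i _
    rw [hS.eigenvectorBasis_apply_self_apply hn x i]
    simp only [RCLike.ofReal_real_eq_id, id_eq]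
    have : lam i * (b.repr x i)^2 ≤ μ * (b.repr x i)^2 :=
      mul_le_mul_of_nonneg_right (hi₀ i) (sq_nonneg _)
    nlinarith [this]
  -- μ is an eigenvalue
  have hmem : μ ∈ eigSet A := by
    refine ⟨(WithLp.equiv 2 (V → ℝ)) (b i₀), ?_, ?_⟩
    · simpa using b.toBasis.ne_zero i₀
    · have h := hS.apply_eigenvectorBasis hn i₀
      have h2 := congrArg (WithLp.equiv 2 (V → ℝ)) (hTapp (b i₀))
      rw [h] at h2
      simpa using h2.symm
  -- every eigenvalue is ≤ μ
  have hub : ∀ x ∈ eigSet A, x ≤ μ := by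
    rintro x ⟨f, hf0, hfe⟩
    have hpos : 0 < f ⬝ᵥ f := by
      have hst : star f = f := by funext w; simp
      have := (Matrix.dotProduct_self_star_pos_iff (v := f)).mpr hf0
      rwa [hst] at this
    have h1 : f ⬝ᵥ A *ᵥ f = x * (f ⬝ᵥ f) := by
      rw [hfe, dotProduct_smul]; rfl
    have := rayleigh f
    rw [h1] at this
    exact le_of_mul_le_mul_right this hpos
  have hsup : sSup (eigSet A) = μ :=
    le_antisymm (csSup_le ⟨μ, hmem⟩ hub) (le_csSup ⟨μ, hub⟩ hmem)
  rw [hsup]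
  exact ⟨hmem, rayleigh⟩

end SpecAux

section QuadAux
open Matrix
variable {V : Type*} [Fintype V] [DecidableEq V]

lemma quad_expand (M : Matrix V V ℝ) (g : V → ℝ) :
    g ⬝ᵥ M *ᵥ g = ∑ x, ∑ y, g x * M x y * g y := by
  simp [dotProduct, mulVec, Finset.mul_sum, mul_assoc]

lemma delta_sum (g : V → ℝ) (p q : V) :
    ∑ x, g x * ((if x = p then (1:ℝ) else 0) - if x = q then 1 else 0) = g p - g q := by
  simp [mul_sub, Finset.sum_sub_distrib, mul_ite, mul_one, mul_zero,
    Finset.sum_ite_eq' Finset.univ]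

lemma quad_of_entry (A B : Matrix V V ℝ) (g c : V → ℝ) (p q : V)
    (h : ∀ x y, B x y = A x y
        + c y * ((if x = p then (1:ℝ) else 0) - if x = q then 1 else 0)
        + c x * ((if y = p then (1:ℝ) else 0) - if y = q then 1 else 0)) :
    g ⬝ᵥ B *ᵥ g = g ⬝ᵥ A *ᵥ g + 2 * (g p - g q) * (∑ w, c w * g w) := by
  rw [quad_expand, quad_expand]
  have key : ∀ x y, g x * B x y * g y = g x * A x y * g y
      + (g x * ((if x = p then (1:ℝ) else 0) - if x = q then 1 else 0)) * (c y * g y)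
      + (c x * g x) * (g y * ((if y = p then (1:ℝ) else 0) - if y = q then 1 else 0)) := by
    intro x y; rw [h x y]; ring
  simp_rw [key, Finset.sum_add_distrib, ← Finset.sum_mul_sum, delta_sum,
    mul_comm (c _) (g _)]
  ring

end QuadAux

section KelAux
open Matrix
variable {V : Type*}

lemma kelmans_self (H : SimpleGraph V) (u : V) : kelmans H u u = H := by
  ext x y
  simp only [kelmans, fromRel_adj]
  constructor
  · rintro ⟨hne, h | h⟩
    · rcases h with ⟨h, -⟩ | ⟨rfl, h, -⟩ | ⟨rfl, -, h, hn⟩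
      · exact h
      · exact h
      · exact (hn h).elim
    · rcases h with ⟨h, -⟩ | ⟨rfl, h, -⟩ | ⟨rfl, -, h, hn⟩
      · exact h.symm
      · exact h.symm
      · exact (hn h).elim
  · intro h
    refine ⟨h.ne, ?_⟩
    by_cases hx : x = u
    · subst hx; exact Or.inl (Or.inr (Or.inl ⟨rfl, h, Or.inr h⟩))
    · by_cases hy : y = u
      · subst hy; exact Or.inr (Or.inr (Or.inl ⟨rfl, h.symm, Or.inr h.symm⟩))
      · exact Or.inl (Or.inl ⟨h, hx, hy⟩)

variable (H : SimpleGraph V) {u v : V}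

lemma kel_adj_uw (huv : u ≠ v) {w : V} (hwu : w ≠ u) (hwv : w ≠ v) :
    (kelmans H u v).Adj u w ↔ (H.Adj u w ∨ H.Adj v w) := by
  simp only [kelmans, fromRel_adj]
  constructor
  · rintro ⟨-, h | h⟩
    · rcases h with ⟨h, -⟩ | ⟨he, -⟩ | ⟨-, -, h, -⟩
      · exact Or.inl h
      · exact (huv he).elim
      · exact Or.inr h
    · rcases h with ⟨h, -⟩ | ⟨he, -⟩ | ⟨he, -⟩
      · exact Or.inl h.symm
      · exact (hwv he).elim
      · exact (hwu he).elim
  · intro h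
    refine ⟨fun e => hwu e.symm, ?_⟩
    by_cases hu : H.Adj u w
    · exact Or.inl (Or.inl ⟨hu, huv, hwv⟩)
    · rcases h with h | h
      · exact (hu h).elim
      · exact Or.inl (Or.inr (Or.inr ⟨trivial, hwv, h, hu⟩))

lemma kel_adj_vw (huv : u ≠ v) {w : V} (hwu : w ≠ u) (hwv : w ≠ v) :
    (kelmans H u v).Adj v w ↔ (H.Adj v w ∧ H.Adj u w) := by
  simp only [kelmans, fromRel_adj]
  constructor
  · rintro ⟨-, h | h⟩
    · rcases h with ⟨-, hvv, -⟩ | ⟨-, h, he | h2⟩ | ⟨he, -⟩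
      · exact (hvv rfl).elim
      · exact (hwu he).elim
      · exact ⟨h, h2⟩
      · exact (huv he.symm).elim
    · rcases h with ⟨-, -, hvv⟩ | ⟨he, -⟩ | ⟨-, hvv, -⟩
      · exact (hvv rfl).elim
      · exact (hwv he).elim
      · exact (hvv rfl).elim
  · rintro ⟨h1, h2⟩
    exact ⟨h1.ne, Or.inl (Or.inr (Or.inl ⟨trivial, h1, Or.inr h2⟩))⟩

lemma kel_adj_other {x y : V} (hxu : x ≠ u) (hxv : x ≠ v) (hyu : y ≠ u) (hyv : y ≠ v) :
    (kelmans H u v).Adj x y ↔ H.Adj x y := by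
  simp only [kelmans, fromRel_adj]
  constructor
  · rintro ⟨-, h | h⟩
    · rcases h with ⟨h, -⟩ | ⟨he, -⟩ | ⟨he, -⟩
      · exact h
      · exact (hxv he).elim
      · exact (hxu he).elim
    · rcases h with ⟨h, -⟩ | ⟨he, -⟩ | ⟨he, -⟩
      · exact h.symm
      · exact (hyv he).elim
      · exact (hyu he).elim
  · intro h
    exact ⟨h.ne, Or.inl (Or.inl ⟨h, hxv, hyv⟩)⟩

lemma kel_adj_uv (huv : u ≠ v) : (kelmans H u v).Adj u v ↔ H.Adj u v := by
  simp only [kelmans, fromRel_adj]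
  constructor
  · rintro ⟨-, h | h⟩
    · rcases h with ⟨-, -, hvv⟩ | ⟨he, -⟩ | ⟨-, hvv, -⟩
      · exact (hvv rfl).elim
      · exact (huv he).elim
      · exact (hvv rfl).elim
    · rcases h with ⟨-, hvv, -⟩ | ⟨-, h, -⟩ | ⟨he, -⟩
      · exact (hvv rfl).elim
      · exact h.symm
      · exact (huv he.symm).elim
  · intro h
    exact ⟨huv, Or.inr (Or.inr (Or.inl ⟨trivial, h.symm, Or.inl trivial⟩))⟩

variable [Fintype V] [DecidableEq V]

open scoped Classical in
lemma kel_entry (huv : u ≠ v) (x y : V) :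
    ((kelmans H u v).adjMatrix ℝ) x y = (H.adjMatrix ℝ) x y
      + (if y ≠ u ∧ y ≠ v ∧ H.Adj v y ∧ ¬ H.Adj u y then (1:ℝ) else 0)
          * ((if x = u then (1:ℝ) else 0) - if x = v then 1 else 0)
      + (if x ≠ u ∧ x ≠ v ∧ H.Adj v x ∧ ¬ H.Adj u x then (1:ℝ) else 0)
          * ((if y = u then (1:ℝ) else 0) - if y = v then 1 else 0) := by
  by_cases hxu : x = u
  case pos =>
    rw [hxu]
    by_cases hyu : y = u
    · rw [hyu]; simp [adjMatrix_apply]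
    by_cases hyv : y = v
    · rw [hyv]; simp [adjMatrix_apply, kel_adj_uv H huv, huv, huv.symm]
    · rw [adjMatrix_apply, adjMatrix_apply, if_pos rfl, if_neg huv, if_neg hyu, if_neg hyv]
      by_cases h1 : H.Adj u y <;> by_cases h2 : H.Adj v y <;>
        simp [kel_adj_uw H huv hyu hyv, h1, h2, hyu, hyv, huv]
  by_cases hxv : x = v
  case pos =>
    rw [hxv]
    by_cases hyu : y = u
    · rw [hyu]
      simp [adjMatrix_apply, kel_adj_uv H huv, huv, huv.symm, SimpleGraph.adj_comm]
    by_cases hyv : y = v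
    · rw [hyv]; simp [adjMatrix_apply]
    · rw [adjMatrix_apply, adjMatrix_apply, if_neg huv.symm, if_pos rfl, if_neg hyu, if_neg hyv]
      by_cases h1 : H.Adj u y <;> by_cases h2 : H.Adj v y <;>
        simp [kel_adj_vw H huv hyu hyv, h1, h2, hyu, hyv, huv.symm]
  by_cases hyu : y = u
  case pos =>
    rw [hyu]
    rw [adjMatrix_apply, adjMatrix_apply, if_pos rfl, if_neg huv, if_neg hxu, if_neg hxv,
      SimpleGraph.adj_comm _ x u, SimpleGraph.adj_comm H x u]
    by_cases h1 : H.Adj u x <;> by_cases h2 : H.Adj v x <;>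
      simp [kel_adj_uw H huv hxu hxv, h1, h2, hxu, hxv, huv, SimpleGraph.adj_comm]
  by_cases hyv : y = v
  case pos =>
    rw [hyv]
    rw [adjMatrix_apply, adjMatrix_apply, if_neg huv.symm, if_pos rfl, if_neg hxu, if_neg hxv,
      SimpleGraph.adj_comm _ x v, SimpleGraph.adj_comm H x v]
    by_cases h1 : H.Adj u x <;> by_cases h2 : H.Adj v x <;>
      simp [kel_adj_vw H huv hxu hxv, h1, h2, hxu, hxv, huv.symm, SimpleGraph.adj_comm]
  · simp [adjMatrix_apply, kel_adj_other H hxu hxv hyu hyv, hxu, hxv, hyu, hyv]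

open scoped Classical in
lemma kel_entry_swap (huv : u ≠ v) (x y : V) :
    ((kelmans H u v).adjMatrix ℝ) (Equiv.swap u v x) (Equiv.swap u v y) = (H.adjMatrix ℝ) x y
      + (if y ≠ u ∧ y ≠ v ∧ H.Adj u y ∧ ¬ H.Adj v y then (1:ℝ) else 0)
          * ((if x = v then (1:ℝ) else 0) - if x = u then 1 else 0)
      + (if x ≠ u ∧ x ≠ v ∧ H.Adj u x ∧ ¬ H.Adj v x then (1:ℝ) else 0)
          * ((if y = v then (1:ℝ) else 0) - if y = u then 1 else 0) := by
  by_cases hxu : x = u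
  case pos =>
    rw [hxu, Equiv.swap_apply_left]
    by_cases hyu : y = u
    · rw [hyu, Equiv.swap_apply_left]; simp [adjMatrix_apply, huv]
    by_cases hyv : y = v
    · rw [hyv, Equiv.swap_apply_right]
      simp [adjMatrix_apply, kel_adj_uv H huv, huv, huv.symm, SimpleGraph.adj_comm]
    · rw [Equiv.swap_apply_of_ne_of_ne hyu hyv,
        adjMatrix_apply, adjMatrix_apply, if_pos rfl, if_neg huv, if_neg hyu, if_neg hyv]
      by_cases h1 : H.Adj u y <;> by_cases h2 : H.Adj v y <;>
        simp [kel_adj_vw H huv hyu hyv, h1, h2, hyu, hyv, huv]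
  by_cases hxv : x = v
  case pos =>
    rw [hxv, Equiv.swap_apply_right]
    by_cases hyu : y = u
    · rw [hyu, Equiv.swap_apply_left]
      simp [adjMatrix_apply, kel_adj_uv H huv, huv, huv.symm, SimpleGraph.adj_comm]
    by_cases hyv : y = v
    · rw [hyv, Equiv.swap_apply_right]; simp [adjMatrix_apply, huv]
    · rw [Equiv.swap_apply_of_ne_of_ne hyu hyv,
        adjMatrix_apply, adjMatrix_apply, if_neg huv.symm, if_pos rfl, if_neg hyu, if_neg hyv]
      by_cases h1 : H.Adj u y <;> by_cases h2 : H.Adj v y <;>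
        simp [kel_adj_uw H huv hyu hyv, h1, h2, hyu, hyv, huv.symm]
  rw [Equiv.swap_apply_of_ne_of_ne hxu hxv]
  by_cases hyu : y = u
  case pos =>
    rw [hyu, Equiv.swap_apply_left,
      adjMatrix_apply, adjMatrix_apply, if_pos rfl, if_neg huv, if_neg hxu, if_neg hxv,
      SimpleGraph.adj_comm _ x v, SimpleGraph.adj_comm H x u]
    by_cases h1 : H.Adj u x <;> by_cases h2 : H.Adj v x <;>
      simp [kel_adj_vw H huv hxu hxv, h1, h2, hxu, hxv, huv, SimpleGraph.adj_comm]
  by_cases hyv : y = v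
  case pos =>
    rw [hyv, Equiv.swap_apply_right,
      adjMatrix_apply, adjMatrix_apply, if_neg huv.symm, if_pos rfl, if_neg hxu, if_neg hxv,
      SimpleGraph.adj_comm _ x u, SimpleGraph.adj_comm H x v]
    by_cases h1 : H.Adj u x <;> by_cases h2 : H.Adj v x <;>
      simp [kel_adj_uw H huv hxu hxv, h1, h2, hxu, hxv, huv.symm, SimpleGraph.adj_comm]
  · rw [Equiv.swap_apply_of_ne_of_ne hyu hyv]
    simp [adjMatrix_apply, kel_adj_other H hxu hxv hyu hyv, hxu, hxv, hyu, hyv]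

end KelAux

theorem stmt13 {V : Type*} [Fintype V] (H : SimpleGraph V) (u v : V) :
    specRad H ≤ specRad (kelmans H u v) := by
  classical
  rcases eq_or_ne u v with rfl | huv
  · rw [kelmans_self]
  rcases isEmpty_or_nonempty V with hV | hV
  · have h0 : ∀ G : SimpleGraph V, specRad G = 0 := by
      intro G
      unfold specRad
      convert Real.sSup_empty
      rw [Set.eq_empty_iff_forall_notMem]
      rintro x ⟨f, hf, -⟩
      exact hf (funext fun w => isEmptyElim w)
    rw [h0, h0]
  unfold specRad
  change sSup (eigSet (H.adjMatrix ℝ)) ≤ sSup (eigSet ((kelmans H u v).adjMatrix ℝ))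
  set A := H.adjMatrix ℝ with hA
  set B := (kelmans H u v).adjMatrix ℝ with hB
  have hAH : A.IsHermitian := by
    rw [Matrix.IsHermitian]
    ext i j
    simp [Matrix.conjTranspose_apply, hA, SimpleGraph.adj_comm]
  have hBH : B.IsHermitian := by
    rw [Matrix.IsHermitian]
    ext i j
    simp [Matrix.conjTranspose_apply, hB, SimpleGraph.adj_comm]
  obtain ⟨⟨f, hf0, hfe⟩, hAray⟩ := sSup_eigSet_spec A hAH
  obtain ⟨-, hBray⟩ := sSup_eigSet_spec B hBH
  set ρ := sSup (eigSet A) with hρ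
  set ρ' := sSup (eigSet B) with hρ'
  set g : V → ℝ := fun w => |f w| with hg
  have hgnn : ∀ w, 0 ≤ g w := fun w => abs_nonneg _
  have hg0 : g ≠ 0 := by
    intro h
    apply hf0
    funext w
    have := congrFun h w
    simpa [hg, abs_eq_zero] using this
  have hggpos : 0 < dotProduct g g := by
    have hst : star g = g := by funext w; simp
    have := (Matrix.dotProduct_self_star_pos_iff (v := g)).mpr hg0
    rwa [hst] at this
  have hAnn : ∀ x y : V, 0 ≤ A x y := by
    intro x y
    rw [hA, SimpleGraph.adjMatrix_apply]
    split_ifs <;> norm_num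
  have hfg : dotProduct f f = dotProduct g g := by
    unfold dotProduct
    exact Finset.sum_congr rfl fun w _ => (abs_mul_abs_self (f w)).symm
  have hfA : dotProduct f (Matrix.mulVec A f) = ρ * dotProduct f f := by
    rw [hfe, dotProduct_smul]
    rfl
  have hfleg : dotProduct f (Matrix.mulVec A f) ≤ dotProduct g (Matrix.mulVec A g) := by
    rw [quad_expand, quad_expand]
    refine Finset.sum_le_sum fun x _ => Finset.sum_le_sum fun y _ => ?_
    calc f x * A x y * f y ≤ |f x * A x y * f y| := le_abs_self _
      _ = g x * A x y * g y := by
          rw [abs_mul, abs_mul, abs_of_nonneg (hAnn x y)]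
  have hgA : ρ * dotProduct g g ≤ dotProduct g (Matrix.mulVec A g) := by
    calc ρ * dotProduct g g = ρ * dotProduct f f := by rw [hfg]
      _ = dotProduct f (Matrix.mulVec A f) := hfA.symm
      _ ≤ dotProduct g (Matrix.mulVec A g) := hfleg
  have key : ∃ g' : V → ℝ, dotProduct g' g' = dotProduct g g ∧ dotProduct g (Matrix.mulVec A g) ≤ dotProduct g' (Matrix.mulVec B g') := by
    by_cases hcase : g v ≤ g u
    · refine ⟨g, rfl, ?_⟩
      have hquad := quad_of_entry A B g
        (fun w => if w ≠ u ∧ w ≠ v ∧ H.Adj v w ∧ ¬ H.Adj u w then (1:ℝ) else 0) u v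
        (fun x y => kel_entry H huv x y)
      rw [hquad]
      have hsnn : 0 ≤ ∑ w, (if w ≠ u ∧ w ≠ v ∧ H.Adj v w ∧ ¬ H.Adj u w then (1:ℝ) else 0)
          * g w := by
        refine Finset.sum_nonneg fun w _ => mul_nonneg ?_ (hgnn w)
        split_ifs <;> norm_num
      nlinarith [mul_nonneg (sub_nonneg.mpr hcase) hsnn]
    · push_neg at hcase
      set σ := Equiv.swap u v with hσ
      set g' : V → ℝ := fun w => g (σ w) with hg'
      have hinv : ∀ w, σ (σ w) = w := fun w => Equiv.swap_apply_self u v w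
      refine ⟨g', ?_, ?_⟩
      · unfold dotProduct
        exact Equiv.sum_comp σ (fun w => g w * g w)
      · set Bs : Matrix V V ℝ := Matrix.of (fun x y => B (σ x) (σ y)) with hBs
        have hswap : dotProduct g' (Matrix.mulVec B g') = dotProduct g (Matrix.mulVec Bs g) := by
          rw [quad_expand, quad_expand]
          rw [← Equiv.sum_comp σ (fun x => ∑ y, g x * Bs x y * g y)]
          refine Finset.sum_congr rfl fun x _ => ?_
          rw [← Equiv.sum_comp σ (fun y => g (σ x) * Bs (σ x) y * g y)]
          refine Finset.sum_congr rfl fun y _ => ?_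
          simp only [hg', hBs, Matrix.of_apply, hinv]
        rw [hswap]
        have hquad := quad_of_entry A Bs g
          (fun w => if w ≠ u ∧ w ≠ v ∧ H.Adj u w ∧ ¬ H.Adj v w then (1:ℝ) else 0) v u
          (fun x y => kel_entry_swap H huv x y)
        rw [hquad]
        have hsnn : 0 ≤ ∑ w, (if w ≠ u ∧ w ≠ v ∧ H.Adj u w ∧ ¬ H.Adj v w then (1:ℝ) else 0)
            * g w := by
          refine Finset.sum_nonneg fun w _ => mul_nonneg ?_ (hgnn w)
          split_ifs <;> norm_num
        nlinarith [mul_nonneg (le_of_lt (sub_pos.mpr hcase)) hsnn]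
  obtain ⟨g', hgg', hineq⟩ := key
  have hfinal : ρ * dotProduct g g ≤ ρ' * dotProduct g g := by
    calc ρ * dotProduct g g ≤ dotProduct g (Matrix.mulVec A g) := hgA
      _ ≤ dotProduct g' (Matrix.mulVec B g') := hineq
      _ ≤ ρ' * dotProduct g' g' := hBray g'
      _ = ρ' * dotProduct g g := by rw [hgg']
  exact le_of_mul_le_mul_right hfinal hggpos
end
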